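/- arXiv:2303.07203 — 7 statements merged into one kernel-verified Lean document; each statement's English description precedes it below -/
import Mathlib

section
/- Let $x, \tilde{x} \in [D]^T$ agree outside $\mathcal{S} \subseteq [T]$, and let $\varphi$ be the non-normalized TF-IDF transform with weights $v_j > 0$, maximal multiplicity $m_{\max}$, and maximal weight $v_{\max}$. If $|\mathcal{S}| \le \|\varphi(x)\| / (4 m_{\max} v_{\max})$, then the cosine similarity satisfies $\frac{\varphi(x)^\top \varphi(\tilde{x})}{\|\varphi(x)\| \, \|\varphi(\tilde{x})\|} \ge 1 - \frac{8 m_{\max} v_{\max} |\mathcal{S}|}{\|\varphi(x)\|}$. -/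
open Finset

set_option maxHeartbeats 1600000 in
/-- Cosine similarity robustness of non-normalized TF-IDF. -/
theorem cosine_similarity_robustness (D T : ℕ) (hT : 0 < T)
    (x xt : Fin T → Fin D) (S : Finset (Fin T))
    (hagree : ∀ t, t ∉ S → x t = xt t)
    (v : Fin D → ℝ) (hv : ∀ j, 0 < v j)
    (mmax vmax : ℝ)
    (hmmax : mmax = ((Finset.univ.sup fun j : Fin D =>
      (Finset.univ.filter fun t => x t = j).card : ℕ) : ℝ))
    (hvmax : vmax = Finset.univ.sup'
      ⟨x ⟨0, hT⟩, Finset.mem_univ _⟩ v)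
    (φ : (Fin T → Fin D) → EuclideanSpace ℝ (Fin D))
    (hφ : ∀ y j, φ y j = ((Finset.univ.filter fun t => y t = j).card : ℝ) * v j / T)
    (hS : (S.card : ℝ) ≤ ‖φ x‖ / (4 * mmax * vmax)) :
    (inner ℝ (φ x) (φ xt) : ℝ) / (‖φ x‖ * ‖φ xt‖) ≥
      1 - 8 * mmax * vmax * S.card / ‖φ x‖ := by
  have hT' : (0:ℝ) < T := by exact_mod_cast hT
  have hT1 : (1:ℝ) ≤ T := by exact_mod_cast hT
  -- basic facts about vmax and mmax
  have hvj : ∀ j, v j ≤ vmax := by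
    intro j; rw [hvmax]; exact Finset.le_sup' v (mem_univ j)
  have hvpos : 0 < vmax := lt_of_lt_of_le (hv (x ⟨0, hT⟩)) (hvj _)
  have hcard0 : ∀ y : Fin T → Fin D,
      1 ≤ (Finset.univ.filter fun t => y t = y ⟨0, hT⟩).card := by
    intro y
    refine Finset.card_pos.mpr ⟨⟨0, hT⟩, ?_⟩
    simp
  have hm1 : (1:ℝ) ≤ mmax := by
    rw [hmmax]
    exact_mod_cast le_trans (hcard0 x)
      (Finset.le_sup (f := fun j : Fin D => (Finset.univ.filter fun t => x t = j).card)
        (mem_univ (x ⟨0, hT⟩)))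
  -- positivity of norms
  have hnormpos : ∀ y : Fin T → Fin D, 0 < ‖φ y‖ := by
    intro y
    have hcoord : 0 < φ y (y ⟨0, hT⟩) := by
      rw [hφ]
      have := hcard0 y
      have h1 : (1:ℝ) ≤ ((Finset.univ.filter fun t => y t = y ⟨0, hT⟩).card : ℝ) := by
        exact_mod_cast this
      exact div_pos (mul_pos (by linarith) (hv _)) hT'
    refine norm_pos_iff.mpr fun h => ?_
    have := congrArg (fun z : EuclideanSpace ℝ (Fin D) => z (y ⟨0, hT⟩)) h
    simp at this
    rw [this] at hcoord
    exact lt_irrefl _ hcoord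
  have hna : 0 < ‖φ x‖ := hnormpos x
  have hnb : 0 < ‖φ xt‖ := hnormpos xt
  -- counting
  set s1 : Fin D → ℕ := fun j => (S.filter fun t => x t = j).card with hs1def
  set s2 : Fin D → ℕ := fun j => (S.filter fun t => xt t = j).card with hs2def
  have key : ∀ (y : Fin T → Fin D) j, (Finset.univ.filter fun t => y t = j).card =
      (S.filter fun t => y t = j).card + (Sᶜ.filter fun t => y t = j).card := by
    intro y j
    rw [← Finset.card_union_of_disjoint
      (Finset.disjoint_filter_filter disjoint_compl_right),
      ← Finset.filter_union, Finset.union_compl]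
  have hcomp : ∀ j, (Sᶜ.filter fun t => x t = j) = (Sᶜ.filter fun t => xt t = j) := by
    intro j
    refine Finset.filter_congr fun t ht => ?_
    rw [hagree t (Finset.mem_compl.mp ht)]
  have hsplit : ∀ j, ((Finset.univ.filter fun t => x t = j).card : ℝ) -
      ((Finset.univ.filter fun t => xt t = j).card : ℝ) = (s1 j : ℝ) - (s2 j : ℝ) := by
    intro j
    rw [key x j, key xt j, hcomp j]
    push_cast
    ring
  have hsum1 : ∑ j : Fin D, (s1 j : ℝ) = S.card := by
    rw [Finset.card_eq_sum_card_fiberwise (f := x) (t := Finset.univ)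
      (fun t _ => mem_univ (x t))]
    push_cast
    rfl
  have hsum2 : ∑ j : Fin D, (s2 j : ℝ) = S.card := by
    rw [Finset.card_eq_sum_card_fiberwise (f := xt) (t := Finset.univ)
      (fun t _ => mem_univ (xt t))]
    push_cast
    rfl
  -- per-coordinate bound
  have hcoord : ∀ j, |φ x j - φ xt j| ≤ ((s1 j : ℝ) + s2 j) * vmax := by
    intro j
    rw [hφ, hφ]
    have he : ((Finset.univ.filter fun t => x t = j).card : ℝ) * v j / T -
        ((Finset.univ.filter fun t => xt t = j).card : ℝ) * v j / T =
        (((Finset.univ.filter fun t => x t = j).card : ℝ) -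
          ((Finset.univ.filter fun t => xt t = j).card : ℝ)) * (v j / T) := by ring
    rw [he, hsplit j, abs_mul]
    have h1 : |(s1 j : ℝ) - (s2 j : ℝ)| ≤ (s1 j : ℝ) + s2 j := by
      have := abs_sub (s1 j : ℝ) (s2 j : ℝ)
      simp only [Nat.abs_cast] at this
      exact this
    have h2 : |v j / T| ≤ vmax := by
      rw [abs_of_nonneg (div_nonneg (hv j).le hT'.le)]
      exact le_trans (div_le_self (hv j).le hT1) (hvj j)
    have h3 : (0:ℝ) ≤ (s1 j : ℝ) + s2 j := by positivity
    exact mul_le_mul h1 h2 (abs_nonneg _) h3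
  -- norm of difference bound
  set ε := ‖φ x - φ xt‖ with hεdef
  have hε0 : 0 ≤ ε := norm_nonneg _
  have hεle : ε ≤ 2 * S.card * vmax := by
    have hsub : ∀ j, (φ x - φ xt) j = φ x j - φ xt j := fun j => rfl
    have h1 : ε ≤ ∑ j : Fin D, |φ x j - φ xt j| := by
      rw [hεdef, EuclideanSpace.norm_eq]
      have hnn : ∀ j ∈ Finset.univ, (0:ℝ) ≤ ‖(φ x - φ xt) j‖ :=
        fun j _ => norm_nonneg _
      calc Real.sqrt (∑ j : Fin D, ‖(φ x - φ xt) j‖ ^ 2)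
          ≤ Real.sqrt ((∑ j : Fin D, ‖(φ x - φ xt) j‖) ^ 2) :=
            Real.sqrt_le_sqrt (Finset.sum_sq_le_sq_sum_of_nonneg hnn)
        _ = ∑ j : Fin D, ‖(φ x - φ xt) j‖ :=
            Real.sqrt_sq (Finset.sum_nonneg hnn)
        _ = ∑ j : Fin D, |φ x j - φ xt j| := by
            simp [hsub, Real.norm_eq_abs]
    have h2 : ∑ j : Fin D, |φ x j - φ xt j| ≤
        ∑ j : Fin D, ((s1 j : ℝ) + s2 j) * vmax :=
      Finset.sum_le_sum fun j _ => hcoord j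
    have h3 : ∑ j : Fin D, ((s1 j : ℝ) + s2 j) * vmax = 2 * S.card * vmax := by
      rw [← Finset.sum_mul, Finset.sum_add_distrib, hsum1, hsum2]
      ring
    linarith
  set M := 4 * mmax * vmax * (S.card : ℝ) with hMdef
  have hScard0 : (0:ℝ) ≤ S.card := Nat.cast_nonneg _
  have hεM : ε ≤ M := by nlinarith [hεle, hm1, hvpos, hScard0]
  have hMna : M ≤ ‖φ x‖ := by
    have h4 : (0:ℝ) < 4 * mmax * vmax := by nlinarith
    rw [le_div_iff₀ h4] at hS
    nlinarith [hS]
  -- inner product lower bound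
  have hI : ‖φ x‖ ^ 2 - ‖φ x‖ * ε ≤ (inner ℝ (φ x) (φ xt) : ℝ) := by
    have h1 : (inner ℝ (φ x) (φ xt) : ℝ) =
        ‖φ x‖ ^ 2 - (inner ℝ (φ x) (φ x - φ xt) : ℝ) := by
      rw [inner_sub_right, real_inner_self_eq_norm_sq]; ring
    have h2 := abs_real_inner_le_norm (φ x) (φ x - φ xt)
    have h3 := neg_abs_le (inner ℝ (φ x) (φ x - φ xt) : ℝ)
    have h4 := le_abs_self (inner ℝ (φ x) (φ x - φ xt) : ℝ)
    rw [h1]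
    rw [← hεdef] at h2
    linarith
  -- triangle inequality
  have htri : ‖φ xt‖ ≤ ‖φ x‖ + ε := by
    have := norm_sub_norm_le (φ xt) (φ x)
    rw [norm_sub_rev] at this
    linarith
  -- final chain
  rw [ge_iff_le]
  have hεna : ε ≤ ‖φ x‖ := le_trans hεM hMna
  have step1 : (‖φ x‖ - ε) / (‖φ x‖ + ε) ≤
      (inner ℝ (φ x) (φ xt) : ℝ) / (‖φ x‖ * ‖φ xt‖) := by
    rw [div_le_div_iff₀ (by positivity) (by positivity)]
    have hb1 := mul_le_mul_of_nonneg_left htri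
      (mul_nonneg (sub_nonneg.mpr hεna) hna.le)
    have hb2 := mul_le_mul_of_nonneg_right hI
      (by positivity : (0:ℝ) ≤ ‖φ x‖ + ε)
    nlinarith [hb1, hb2]
  have step2 : 1 - 8 * mmax * vmax * S.card / ‖φ x‖ ≤
      (‖φ x‖ - ε) / (‖φ x‖ + ε) := by
    have e1 : 1 - 8 * mmax * vmax * (S.card : ℝ) / ‖φ x‖ = (‖φ x‖ - 2 * M) / ‖φ x‖ := by
      rw [hMdef]; field_simp; ring
    rw [e1, div_le_div_iff₀ hna (by positivity)]
    have h1 : ‖φ x‖ * ε ≤ ‖φ x‖ * M := mul_le_mul_of_nonneg_left hεM hna.le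
    have h2 : (0:ℝ) ≤ M * ε := mul_nonneg (le_trans hε0 hεM) hε0
    nlinarith [h1, h2]
  linarith
end

section
/- Let $x, \tilde{x} \in [D]^T$ agree outside $\mathcal{S} \subseteq [T]$ with $|\mathcal{S}| \le \|\varphi(x)\|/(4 m_{\max} v_{\max})$, where $\varphi$ is non-normalized TF-IDF. Let $\bar{\varphi}(y) = \varphi(y)/\|\varphi(y)\|$ be the normalized TF-IDF. Then $\|\bar\varphi(x) - \bar\varphi(\tilde{x})\| \le \frac{4 m_{\max}^{1/2} v_{\max}^{1/2} D^{1/4}}{v_{\min}^{1/2}} \sqrt{\frac{|\mathcal{S}|}{T}}$. -/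
open Finset

theorem aux_normalize {E : Type*} [NormedAddCommGroup E] [NormedSpace ℝ E] (a b : E)
    (ha : a ≠ 0) (hb : b ≠ 0) :
    ‖‖a‖⁻¹ • a - ‖b‖⁻¹ • b‖ ≤ 2 * ‖a - b‖ / ‖a‖ := by
  have ha' : (0:ℝ) < ‖a‖ := norm_pos_iff.mpr ha
  have hb' : (0:ℝ) < ‖b‖ := norm_pos_iff.mpr hb
  have h1 : ‖a‖⁻¹ • a - ‖b‖⁻¹ • b = ‖a‖⁻¹ • (a - b) + (‖a‖⁻¹ - ‖b‖⁻¹) • b := by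
    rw [smul_sub, sub_smul]; abel
  rw [h1]
  have h2 : ‖‖a‖⁻¹ • (a - b)‖ = ‖a - b‖ / ‖a‖ := by
    rw [norm_smul, norm_inv, norm_norm]; ring
  have h3 : ‖(‖a‖⁻¹ - ‖b‖⁻¹) • b‖ ≤ ‖a - b‖ / ‖a‖ := by
    rw [norm_smul, Real.norm_eq_abs]
    have he : ‖a‖⁻¹ - ‖b‖⁻¹ = (‖b‖ - ‖a‖) / (‖a‖ * ‖b‖) := by field_simp
    rw [he, abs_div, abs_of_pos (mul_pos ha' hb')]
    have h4 : |‖b‖ - ‖a‖| ≤ ‖a - b‖ := by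
      rw [← norm_neg (a - b), neg_sub]; exact abs_norm_sub_norm_le b a
    calc |‖b‖ - ‖a‖| / (‖a‖ * ‖b‖) * ‖b‖ = |‖b‖ - ‖a‖| / ‖a‖ := by
          field_simp
      _ ≤ ‖a - b‖ / ‖a‖ := by gcongr
  calc ‖‖a‖⁻¹ • (a - b) + (‖a‖⁻¹ - ‖b‖⁻¹) • b‖
      ≤ ‖‖a‖⁻¹ • (a - b)‖ + ‖(‖a‖⁻¹ - ‖b‖⁻¹) • b‖ := norm_add_le _ _
    _ ≤ ‖a - b‖ / ‖a‖ + ‖a - b‖ / ‖a‖ := by rw [h2]; gcongr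
    _ = 2 * ‖a - b‖ / ‖a‖ := by ring

set_option maxHeartbeats 1000000 in
/-- Robustness of the normalized TF-IDF transform. -/
theorem normalized_tfidf_robustness (D T : ℕ) (hT : 0 < T)
    (x xt : Fin T → Fin D) (S : Finset (Fin T))
    (hagree : ∀ t, t ∉ S → x t = xt t)
    (v : Fin D → ℝ) (hv : ∀ j, 0 < v j)
    (mmax vmax vmin : ℝ)
    (hmmax : mmax = ((Finset.univ.sup fun j : Fin D =>
      (Finset.univ.filter fun t => x t = j).card : ℕ) : ℝ))
    (hvmax : vmax = Finset.univ.sup' ⟨x ⟨0, hT⟩, Finset.mem_univ _⟩ v)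
    (hvmin : vmin = (Finset.univ.image x).inf'
      ⟨x ⟨0, hT⟩, Finset.mem_image_of_mem x (Finset.mem_univ _)⟩ v)
    (φ : (Fin T → Fin D) → EuclideanSpace ℝ (Fin D))
    (hφ : ∀ y j, φ y j = ((Finset.univ.filter fun t => y t = j).card : ℝ) * v j / T)
    (φbar : (Fin T → Fin D) → EuclideanSpace ℝ (Fin D))
    (hφbar : ∀ y, φbar y = ‖φ y‖⁻¹ • φ y)
    (hS : (S.card : ℝ) ≤ ‖φ x‖ / (4 * mmax * vmax)) :
    ‖φbar x - φbar xt‖ ≤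
      4 * Real.sqrt mmax * Real.sqrt vmax * (D : ℝ) ^ ((1 : ℝ) / 4) / Real.sqrt vmin *
        Real.sqrt (S.card / T) := by
  set s : ℝ := (S.card : ℝ) with hs
  have hs0 : 0 ≤ s := Nat.cast_nonneg _
  have hT1 : (1 : ℝ) ≤ T := by exact_mod_cast hT
  have hTpos : (0 : ℝ) < T := by positivity
  set j0 : Fin D := x ⟨0, hT⟩ with hj0
  -- counts
  set c : (Fin T → Fin D) → Fin D → ℕ := fun y j => (Finset.univ.filter fun t => y t = j).card
    with hc
  have hcx0 : 0 < c x j0 := Finset.card_pos.mpr ⟨⟨0, hT⟩, by simp [hc, hj0]⟩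
  have hcxt0 : 0 < c xt (xt ⟨0, hT⟩) := Finset.card_pos.mpr ⟨⟨0, hT⟩, by simp [hc]⟩
  -- basic bounds on mmax, vmax, vmin
  have hmmax1 : (1 : ℝ) ≤ mmax := by
    rw [hmmax]
    exact_mod_cast le_trans hcx0 (Finset.le_sup (f := fun j => c x j) (Finset.mem_univ j0))
  have hvmaxj : ∀ j, v j ≤ vmax := fun j => hvmax ▸ Finset.le_sup' v (Finset.mem_univ j)
  have hvmax0 : 0 < vmax := lt_of_lt_of_le (hv j0) (hvmaxj j0)
  have hvmin0 : 0 < vmin := by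
    rw [hvmin]
    exact (Finset.lt_inf'_iff _).mpr fun b _ => hv b
  have hvminle : ∀ t : Fin T, vmin ≤ v (x t) := fun t => by
    rw [hvmin]
    exact Finset.inf'_le v (Finset.mem_image_of_mem x (Finset.mem_univ t))
  -- positivity of norms
  have hNpos : 0 < ‖φ x‖ := by
    rw [norm_pos_iff]
    intro h
    have h0 : φ x j0 = 0 := by rw [h]; rfl
    rw [hφ] at h0
    have : 0 < ((Finset.univ.filter fun t => x t = j0).card : ℝ) * v j0 / T := by
      have hcc : (0:ℝ) < ((Finset.univ.filter fun t => x t = j0).card : ℝ) := by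
        exact_mod_cast hcx0
      exact div_pos (mul_pos hcc (hv j0)) hTpos
    linarith [this.trans_eq h0]
  have hNtpos : 0 < ‖φ xt‖ := by
    rw [norm_pos_iff]
    intro h
    have h0 : φ xt (xt ⟨0, hT⟩) = 0 := by rw [h]; rfl
    rw [hφ] at h0
    have : 0 < ((Finset.univ.filter fun t => xt t = xt ⟨0, hT⟩).card : ℝ) * v (xt ⟨0, hT⟩) / T := by
      have hcc : (0:ℝ) < ((Finset.univ.filter fun t => xt t = xt ⟨0, hT⟩).card : ℝ) := by
        exact_mod_cast hcxt0
      exact div_pos (mul_pos hcc (hv _)) hTpos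
    linarith [this.trans_eq h0]
  -- count decomposition over S / Sᶜ
  have hdecomp : ∀ (y : Fin T → Fin D) (j : Fin D),
      c y j = (S.filter fun t => y t = j).card + (Sᶜ.filter fun t => y t = j).card := by
    intro y j
    rw [hc]
    rw [← Finset.card_union_of_disjoint
      (Finset.disjoint_filter_filter disjoint_compl_right),
      ← Finset.filter_union, Finset.union_compl]
  have hcompl_eq : ∀ j : Fin D,
      (Sᶜ.filter fun t => x t = j) = (Sᶜ.filter fun t => xt t = j) := by
    intro j
    apply Finset.filter_congr
    intro t ht
    rw [hagree t (Finset.mem_compl.mp ht)]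
  have hfiber : ∀ y : Fin T → Fin D, ∑ j : Fin D, (S.filter fun t => y t = j).card = S.card :=
    fun y => (Finset.card_eq_sum_card_fiberwise (fun t _ => Finset.mem_univ (y t))).symm
  -- ℓ¹ bound on count differences
  have hl1 : ∑ j : Fin D, |(c x j : ℝ) - (c xt j : ℝ)| ≤ 2 * s := by
    have : ∀ j : Fin D, |(c x j : ℝ) - (c xt j : ℝ)| ≤
        ((S.filter fun t => x t = j).card : ℝ) + ((S.filter fun t => xt t = j).card : ℝ) := by
      intro j
      rw [hdecomp x j, hdecomp xt j, hcompl_eq j]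
      push_cast
      rw [abs_le]
      constructor <;> nlinarith [Nat.cast_nonneg (α := ℝ) (S.filter fun t => x t = j).card,
        Nat.cast_nonneg (α := ℝ) (S.filter fun t => xt t = j).card]
    calc ∑ j : Fin D, |(c x j : ℝ) - (c xt j : ℝ)|
        ≤ ∑ j : Fin D, (((S.filter fun t => x t = j).card : ℝ)
            + ((S.filter fun t => xt t = j).card : ℝ)) := Finset.sum_le_sum fun j _ => this j
      _ = 2 * s := by
          rw [Finset.sum_add_distrib]
          rw [hs, ← Nat.cast_sum, ← Nat.cast_sum, hfiber x, hfiber xt]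
          ring
  -- norm difference bound
  have hterm : ∀ j : Fin D, ‖(φ x - φ xt) j‖ = |(c x j : ℝ) - (c xt j : ℝ)| * v j / T := by
    intro j
    have h1 : (φ x - φ xt) j = φ x j - φ xt j := rfl
    have h2 : φ x j - φ xt j = ((c x j : ℝ) - (c xt j : ℝ)) * v j / T := by
      simp only [hc]; rw [hφ, hφ]; ring
    rw [h1, h2, Real.norm_eq_abs, abs_div, abs_mul, abs_of_pos (hv j), abs_of_pos hTpos]
  have hnd : ‖φ x - φ xt‖ ≤ 2 * s * vmax / T := by
    calc ‖φ x - φ xt‖ = Real.sqrt (∑ j : Fin D, ‖(φ x - φ xt) j‖ ^ 2) :=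
          EuclideanSpace.norm_eq _
      _ ≤ Real.sqrt ((∑ j : Fin D, ‖(φ x - φ xt) j‖) ^ 2) :=
          Real.sqrt_le_sqrt (Finset.sum_sq_le_sq_sum_of_nonneg fun j _ => norm_nonneg _)
      _ = ∑ j : Fin D, ‖(φ x - φ xt) j‖ :=
          Real.sqrt_sq (Finset.sum_nonneg fun j _ => norm_nonneg _)
      _ = ∑ j : Fin D, |(c x j : ℝ) - (c xt j : ℝ)| * v j / T :=
          Finset.sum_congr rfl fun j _ => hterm j
      _ ≤ ∑ j : Fin D, |(c x j : ℝ) - (c xt j : ℝ)| * vmax / T := by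
          refine Finset.sum_le_sum fun j _ => ?_
          gcongr
          exact hvmaxj j
      _ = (∑ j : Fin D, |(c x j : ℝ) - (c xt j : ℝ)|) * vmax / T := by
          rw [← Finset.sum_div, ← Finset.sum_mul]
      _ ≤ 2 * s * vmax / T := by gcongr
  -- lower bound on norm
  have hlow : vmin ≤ Real.sqrt D * ‖φ x‖ := by
    have hφc : ∀ j : Fin D, φ x j = (c x j : ℝ) * v j / T := by
      intro j; simp only [hc]; rw [hφ]
    have hsumc : ∑ j : Fin D, (c x j : ℝ) = T := by
      have h1 : ∑ j : Fin D, c x j = T := by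
        simp only [hc]
        rw [← Finset.card_eq_sum_card_fiberwise (fun t _ => Finset.mem_univ (x t))]
        simp
      exact_mod_cast congrArg (Nat.cast (R := ℝ)) h1
    have hsumlow : vmin ≤ ∑ j : Fin D, φ x j := by
      have h1 : ∀ j : Fin D, (c x j : ℝ) * vmin / T ≤ φ x j := by
        intro j
        rw [hφc]
        rcases Nat.eq_zero_or_pos (c x j) with h | h
        · simp [h]
        · obtain ⟨t, ht⟩ := Finset.card_pos.mp h
          have hxt : x t = j := by
            simp only [hc, Finset.mem_filter] at ht
            exact ht.2
          have : vmin ≤ v j := hxt ▸ hvminle t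
          gcongr
      calc vmin = (∑ j : Fin D, (c x j : ℝ)) * vmin / T := by
            rw [hsumc]; field_simp
        _ = ∑ j : Fin D, (c x j : ℝ) * vmin / T := by
            rw [Finset.sum_mul, Finset.sum_div]
        _ ≤ ∑ j : Fin D, φ x j := Finset.sum_le_sum fun j _ => h1 j
    have hnormsq : ‖φ x‖ ^ 2 = ∑ j : Fin D, (φ x j) ^ 2 := by
      rw [EuclideanSpace.norm_eq, Real.sq_sqrt (Finset.sum_nonneg fun j _ => by positivity)]
      exact Finset.sum_congr rfl fun j _ => by rw [Real.norm_eq_abs, sq_abs]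
    have hcs : (∑ j : Fin D, φ x j) ^ 2 ≤ (D : ℝ) * ∑ j : Fin D, (φ x j) ^ 2 := by
      have := sq_sum_le_card_mul_sum_sq (s := Finset.univ) (f := fun j : Fin D => φ x j)
      simpa using this
    have hv2 : vmin ^ 2 ≤ (D : ℝ) * ‖φ x‖ ^ 2 := by
      rw [hnormsq]
      refine le_trans ?_ hcs
      exact pow_le_pow_left₀ hvmin0.le hsumlow 2
    have := Real.sqrt_le_sqrt hv2
    rwa [Real.sqrt_sq hvmin0.le, Real.sqrt_mul (Nat.cast_nonneg D), Real.sqrt_sq hNpos.le]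
      at this
  -- combine
  rw [hφbar, hφbar]
  have hkey : ‖‖φ x‖⁻¹ • φ x - ‖φ xt‖⁻¹ • φ xt‖ ≤ 4 * s * vmax / (T * ‖φ x‖) := by
    calc ‖‖φ x‖⁻¹ • φ x - ‖φ xt‖⁻¹ • φ xt‖
        ≤ 2 * ‖φ x - φ xt‖ / ‖φ x‖ :=
          aux_normalize _ _ (norm_pos_iff.mp hNpos) (norm_pos_iff.mp hNtpos)
      _ ≤ 2 * (2 * s * vmax / T) / ‖φ x‖ := by gcongr
      _ = 4 * s * vmax / (T * ‖φ x‖) := by field_simp; ring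
  refine hkey.trans ?_
  set N := ‖φ x‖ with hN
  have hd2 : ((D : ℝ) ^ ((1 : ℝ) / 4)) ^ 2 = Real.sqrt D := by
    rw [← Real.rpow_natCast ((D : ℝ) ^ ((1 : ℝ) / 4)) 2, ← Real.rpow_mul (Nat.cast_nonneg D),
      Real.sqrt_eq_rpow]
    norm_num
  have hS' : 4 * mmax * vmax * s ≤ N := by
    have h40 : (0 : ℝ) < 4 * mmax * vmax := by nlinarith
    rw [le_div_iff₀ h40] at hS
    calc 4 * mmax * vmax * s = s * (4 * mmax * vmax) := by ring
      _ ≤ N := hS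
  have hsv : 4 * s * vmax ≤ N := by
    linarith [hS', mul_nonneg (mul_nonneg hs0 hvmax0.le) (sub_nonneg.mpr hmmax1)]
  have hmmax0 : (0 : ℝ) ≤ mmax := le_trans zero_le_one hmmax1
  have hB2 : (4 * Real.sqrt mmax * Real.sqrt vmax * (D : ℝ) ^ ((1 : ℝ) / 4) / Real.sqrt vmin *
      Real.sqrt (s / T)) ^ 2 = 16 * mmax * vmax * Real.sqrt D * s / (vmin * T) := by
    rw [mul_pow, div_pow, mul_pow, mul_pow, mul_pow, hd2, Real.sq_sqrt hmmax0,
      Real.sq_sqrt hvmax0.le, Real.sq_sqrt hvmin0.le,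
      Real.sq_sqrt (by positivity : (0 : ℝ) ≤ s / T)]
    ring
  have hBnn : (0 : ℝ) ≤ 4 * Real.sqrt mmax * Real.sqrt vmax * (D : ℝ) ^ ((1 : ℝ) / 4) /
      Real.sqrt vmin * Real.sqrt (s / T) :=
    mul_nonneg (div_nonneg (mul_nonneg (mul_nonneg (mul_nonneg (by norm_num)
      (Real.sqrt_nonneg _)) (Real.sqrt_nonneg _)) (Real.rpow_nonneg (Nat.cast_nonneg D) _))
      (Real.sqrt_nonneg _)) (Real.sqrt_nonneg _)
  refine le_of_pow_le_pow_left₀ two_ne_zero hBnn ?_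
  rw [hB2, div_pow]
  rw [div_le_div_iff₀ (by positivity) (by positivity)]
  have hmT : (0 : ℝ) ≤ 4 * mmax * T - 1 := by nlinarith [hmmax1, hT1]
  linarith [mul_le_mul_of_nonneg_left hlow
      (show (0 : ℝ) ≤ 16 * s ^ 2 * vmax ^ 2 * T by positivity),
    mul_le_mul_of_nonneg_left hsv
      (show (0 : ℝ) ≤ 4 * s * vmax * Real.sqrt D * N * T by positivity),
    mul_nonneg (show (0 : ℝ) ≤ 4 * s * vmax * Real.sqrt D * N ^ 2 * T by positivity) hmT]
end

section
/- Let $\sigma = \sigma(x)$ be the softmax of some $x \in \mathbb{R}^D$ with $D \ge 2$, and let $A = \mathrm{Diag}(\sigma) - \sigma \sigma^\top$. Then the kernel of $A$ is exactly the span of the all-ones vector $\mathds{1}$, and for every unit vector $v$ orthogonal to $\mathds{1}$, $D \, (\min_i \sigma_i)^2 \le v^\top A v \le D \, (\max_i \sigma_i)^2$. Consequently the smallest nonzero eigenvalue of $A$ is at least $D(\min_i \sigma_i)^2$ and the largest eigenvalue is at most $D(\max_i \sigma_i)^2$. -/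
open Finset Matrix

/-- The softmax function. -/
noncomputable def softmax (D : ℕ) (x : EuclideanSpace ℝ (Fin D)) :
    EuclideanSpace ℝ (Fin D) :=
  WithLp.toLp 2 (fun i => Real.exp (x i) / ∑ j, Real.exp (x j))

/-- Spectrum of the softmax Jacobian `A = Diag(σ) - σσᵀ`: its kernel is the span of the
all-ones vector, the quadratic form on unit vectors orthogonal to `𝟙` is between
`D σ_min²` and `D σ_max²`, and consequently every nonzero eigenvalue is at least `D σ_min²`
and every eigenvalue is at most `D σ_max²`. -/
theorem softmax_jacobian_spectrum (D : ℕ) (hD : 2 ≤ D) (x : EuclideanSpace ℝ (Fin D)) :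
    ∀ σmin σmax : ℝ,
    σmin = Finset.univ.inf' ⟨⟨0, by omega⟩, Finset.mem_univ _⟩ (fun i => softmax D x i) →
    σmax = Finset.univ.sup' ⟨⟨0, by omega⟩, Finset.mem_univ _⟩ (fun i => softmax D x i) →
    ∀ A : Matrix (Fin D) (Fin D) ℝ,
    A = Matrix.diagonal (fun i => softmax D x i) -
      Matrix.vecMulVec (fun i => softmax D x i) (fun i => softmax D x i) →
    ((∀ v : Fin D → ℝ, A.mulVec v = 0 ↔ ∃ c : ℝ, v = fun _ => c) ∧
    (∀ v : Fin D → ℝ, ∑ i, v i ^ 2 = 1 → ∑ i, v i = 0 →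
      (D : ℝ) * σmin ^ 2 ≤ v ⬝ᵥ A.mulVec v ∧ v ⬝ᵥ A.mulVec v ≤ (D : ℝ) * σmax ^ 2) ∧
    (∀ (μ : ℝ) (v : Fin D → ℝ), v ≠ 0 → A.mulVec v = μ • v →
      (μ ≠ 0 → (D : ℝ) * σmin ^ 2 ≤ μ) ∧ μ ≤ (D : ℝ) * σmax ^ 2)) := by
  intro σmin σmax hmin hmax A hA
  set σ : Fin D → ℝ := fun i => softmax D x i with hσdef
  have i0 : Fin D := ⟨0, by omega⟩
  have hE : 0 < ∑ j, Real.exp (x j) :=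
    Finset.sum_pos (fun j _ => Real.exp_pos _) ⟨i0, Finset.mem_univ _⟩
  have hσpos : ∀ i, 0 < σ i := fun i => div_pos (Real.exp_pos _) hE
  have hσsum : ∑ i, σ i = 1 := by
    simp only [hσdef, softmax]
    rw [← Finset.sum_div, div_self hE.ne']
  have hminpos : 0 < σmin := by
    rw [hmin]; exact (Finset.lt_inf'_iff _).mpr (fun i _ => hσpos i)
  have hminle : ∀ i, σmin ≤ σ i := fun i => hmin ▸ Finset.inf'_le _ (Finset.mem_univ i)
  have hmaxle : ∀ i, σ i ≤ σmax := fun i => hmax ▸ Finset.le_sup' _ (Finset.mem_univ i)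
  have hmaxpos : 0 < σmax := lt_of_lt_of_le (hσpos i0) (hmaxle i0)
  have hAv : ∀ (v : Fin D → ℝ) (i : Fin D),
      A.mulVec v i = σ i * v i - σ i * (∑ j, σ j * v j) := by
    intro v i
    simp [hA, Matrix.mulVec, dotProduct, Matrix.diagonal_apply, Matrix.vecMulVec_apply,
      ite_mul, sub_mul, Finset.sum_sub_distrib, Finset.mul_sum, mul_assoc]
  have hquad : ∀ v : Fin D → ℝ,
      v ⬝ᵥ A.mulVec v = (∑ j, σ j * v j ^ 2) - (∑ j, σ j * v j) ^ 2 := by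
    intro v
    simp only [dotProduct, hAv, mul_sub]
    rw [Finset.sum_sub_distrib]
    congr 1
    · exact Finset.sum_congr rfl fun i _ => by ring
    · rw [sq, Finset.sum_mul]
      exact Finset.sum_congr rfl fun i _ => by ring
  have hid : ∀ (w v : Fin D → ℝ), ∑ j, ∑ k, w j * w k * (v j - v k) ^ 2
      = 2 * (∑ j, w j) * (∑ j, w j * v j ^ 2) - 2 * (∑ j, w j * v j) ^ 2 := by
    intro w v
    have h1 : ∀ j k : Fin D, w j * w k * (v j - v k) ^ 2
        = (w j * v j ^ 2) * w k + w j * (w k * v k ^ 2) - 2 * ((w j * v j) * (w k * v k)) :=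
      fun j k => by ring
    simp_rw [h1]
    simp only [Finset.sum_sub_distrib, Finset.sum_add_distrib, ← Finset.sum_mul,
      ← Finset.mul_sum]
    ring
  have hkey : ∀ v : Fin D → ℝ,
      2 * (v ⬝ᵥ A.mulVec v) = ∑ j, ∑ k, σ j * σ k * (v j - v k) ^ 2 := by
    intro v
    rw [hid σ v, hquad v, hσsum]; ring
  have hbound : ∀ v : Fin D → ℝ, (∑ i, v i) = 0 →
      (D : ℝ) * σmin ^ 2 * (∑ i, v i ^ 2) ≤ v ⬝ᵥ A.mulVec v ∧
      v ⬝ᵥ A.mulVec v ≤ (D : ℝ) * σmax ^ 2 * (∑ i, v i ^ 2) := by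
    intro v hv
    have hΔ : ∑ j, ∑ k, (fun _ : Fin D => (1:ℝ)) j * (fun _ : Fin D => (1:ℝ)) k * (v j - v k) ^ 2
        = 2 * (D : ℝ) * (∑ i, v i ^ 2) := by
      rw [hid (fun _ => (1:ℝ)) v]
      simp [hv, Finset.card_univ]
    simp only [one_mul] at hΔ
    have lower : σmin ^ 2 * ∑ j, ∑ k, (v j - v k) ^ 2
        ≤ ∑ j, ∑ k, σ j * σ k * (v j - v k) ^ 2 := by
      rw [Finset.mul_sum]
      refine Finset.sum_le_sum fun j _ => ?_
      rw [Finset.mul_sum]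
      refine Finset.sum_le_sum fun k _ => ?_
      have h : σmin ^ 2 ≤ σ j * σ k := by
        rw [sq]; exact mul_le_mul (hminle j) (hminle k) hminpos.le (hσpos j).le
      exact mul_le_mul_of_nonneg_right h (sq_nonneg _)
    have upper : ∑ j, ∑ k, σ j * σ k * (v j - v k) ^ 2
        ≤ σmax ^ 2 * ∑ j, ∑ k, (v j - v k) ^ 2 := by
      rw [Finset.mul_sum]
      refine Finset.sum_le_sum fun j _ => ?_
      rw [Finset.mul_sum]
      refine Finset.sum_le_sum fun k _ => ?_
      have h : σ j * σ k ≤ σmax ^ 2 := by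
        rw [sq]; exact mul_le_mul (hmaxle j) (hmaxle k) (hσpos k).le hmaxpos.le
      exact mul_le_mul_of_nonneg_right h (sq_nonneg _)
    have hk := hkey v
    constructor <;> nlinarith [lower, upper, hk, hΔ]
  refine ⟨?_, ?_, ?_⟩
  · -- kernel
    intro v
    constructor
    · intro h
      have h0 : v ⬝ᵥ A.mulVec v = 0 := by rw [h]; simp [dotProduct]
      have hsum0 : ∑ j, ∑ k, σ j * σ k * (v j - v k) ^ 2 = 0 := by
        rw [← hkey v, h0]; ring
      have hnn : ∀ j : Fin D, ∀ k : Fin D, 0 ≤ σ j * σ k * (v j - v k) ^ 2 := fun j k => by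
        have := (hσpos j).le; have := (hσpos k).le; positivity
      have hterm : ∀ j ∈ Finset.univ, ∀ k ∈ (Finset.univ : Finset (Fin D)),
          σ j * σ k * (v j - v k) ^ 2 = 0 := by
        intro j _ k hk
        have hinner : ∀ j ∈ (Finset.univ : Finset (Fin D)),
            ∑ k, σ j * σ k * (v j - v k) ^ 2 = 0 :=
          fun j hj => (Finset.sum_eq_zero_iff_of_nonneg
            (fun j _ => Finset.sum_nonneg fun k _ => hnn j k)).mp hsum0 j hj
        exact (Finset.sum_eq_zero_iff_of_nonneg (fun k _ => hnn j k)).mp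
          (hinner j (Finset.mem_univ j)) k hk
      refine ⟨v i0, funext fun i => ?_⟩
      have h1 := hterm i (Finset.mem_univ _) i0 (Finset.mem_univ _)
      have hσi := hσpos i; have hσ0 := hσpos i0
      have : (v i - v i0) ^ 2 = 0 := by
        rcases mul_eq_zero.mp h1 with h | h
        · exact absurd h (by positivity)
        · exact h
      have := pow_eq_zero_iff (n := 2) (by norm_num) |>.mp this
      linarith [sub_eq_zero.mp this]
    · rintro ⟨c, rfl⟩
      funext i
      rw [hAv]
      simp only [← Finset.sum_mul, hσsum, one_mul]
      simp
  · -- quadratic form bounds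
    intro v hv1 hv0
    have := hbound v hv0
    rw [hv1, mul_one, mul_one] at this
    exact this
  · -- eigenvalues
    intro μ v hv hAe
    have htr : μ * ∑ i, v i = 0 := by
      have h1 : ∑ i, A.mulVec v i = ∑ i, (μ • v) i := by rw [hAe]
      have h2 : ∑ i, A.mulVec v i = 0 := by
        simp only [hAv, Finset.sum_sub_distrib, ← Finset.sum_mul, hσsum, one_mul]
        ring
      rw [h2] at h1
      simp only [Pi.smul_apply, smul_eq_mul, ← Finset.mul_sum] at h1
      linarith
    have hN : 0 < ∑ i, v i ^ 2 := by
      obtain ⟨i, hi⟩ := Function.ne_iff.mp hv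
      exact Finset.sum_pos' (fun j _ => sq_nonneg _)
        ⟨i, Finset.mem_univ _, pow_two_pos_of_ne_zero hi⟩
    have hquadv : v ⬝ᵥ A.mulVec v = μ * ∑ i, v i ^ 2 := by
      rw [hAe]
      simp only [dotProduct, Pi.smul_apply, smul_eq_mul, Finset.mul_sum]
      exact Finset.sum_congr rfl fun i _ => by ring
    constructor
    · intro hμ
      have hv0 : ∑ i, v i = 0 := (mul_eq_zero.mp htr).resolve_left hμ
      have hb := (hbound v hv0).1
      rw [hquadv] at hb
      nlinarith
    · rcases eq_or_ne μ 0 with rfl | hμ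
      · positivity
      · have hv0 : ∑ i, v i = 0 := (mul_eq_zero.mp htr).resolve_left hμ
        have hb := (hbound v hv0).2
        rw [hquadv] at hb
        nlinarith
end

section
/- Let $\rho > 0$ and $D \ge 2$. Then $\max_{i \in [D]} \sup \{ \sigma_i(x) : x \in \mathbb{R}^D, \|x\| \le \rho, \sum_j x_j = 0 \} = \frac{1}{1 + (D-1) e^{-\sqrt{D/(D-1)}\, \rho}}$, where $\sigma$ is the softmax. -/
open Finset

set_option maxHeartbeats 1000000 in
/-- Maximal value of the softmax over the ball of radius `ρ` intersected with the hyperplane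
`{∑ xⱼ = 0}`. -/
theorem softmax_max (D : ℕ) (hD : 2 ≤ D) (ρ : ℝ) (hρ : 0 < ρ) :
    IsLUB {r : ℝ | ∃ (i : Fin D) (x : EuclideanSpace ℝ (Fin D)),
        ‖x‖ ≤ ρ ∧ ∑ j, x j = 0 ∧ r = softmax D x i}
      (1 / (1 + ((D : ℝ) - 1) *
        Real.exp (-(Real.sqrt ((D : ℝ) / ((D : ℝ) - 1)) * ρ)))) := by
  have hD1 : (1:ℝ) ≤ (D:ℝ) - 1 := by
    have : (2:ℝ) ≤ (D:ℝ) := by exact_mod_cast hD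
    linarith
  have hDm : (0:ℝ) < (D:ℝ) - 1 := by linarith
  have hDpos : (0:ℝ) < (D:ℝ) := by linarith
  set s : ℝ := Real.sqrt ((D : ℝ) / ((D : ℝ) - 1)) with hs_def
  have hs2 : s ^ 2 = (D:ℝ) / ((D:ℝ) - 1) := Real.sq_sqrt (by positivity)
  have hs_pos : 0 < s := Real.sqrt_pos.mpr (by positivity)
  set B : ℝ := 1 / (1 + ((D : ℝ) - 1) * Real.exp (-(s * ρ))) with hB_def
  have hexp_pos : (0:ℝ) < Real.exp (-(s * ρ)) := Real.exp_pos _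
  -- membership
  have hmem : B ∈ {r : ℝ | ∃ (i : Fin D) (x : EuclideanSpace ℝ (Fin D)),
        ‖x‖ ≤ ρ ∧ ∑ j, x j = 0 ∧ r = softmax D x i} := by
    have hD0 : 0 < D := by omega
    set i0 : Fin D := ⟨0, hD0⟩ with hi0
    set y : EuclideanSpace ℝ (Fin D) :=
      WithLp.toLp 2 (fun j => if j = i0 then ρ / s else -(ρ / (s * ((D:ℝ) - 1)))) with hy
    have hkey : ∀ a b : ℝ, ∑ j : Fin D, (if j = i0 then a else b)
        = a + ((D:ℝ) - 1) * b := by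
      intro a b
      rw [← Finset.add_sum_erase _ _ (Finset.mem_univ i0), if_pos rfl,
        Finset.sum_congr rfl (fun j hj => if_neg (Finset.mem_erase.mp hj).1),
        Finset.sum_const, Finset.card_erase_of_mem (Finset.mem_univ i0),
        Finset.card_univ, Fintype.card_fin, nsmul_eq_mul]
      have h1 : 1 ≤ D := by omega
      push_cast [h1]; ring
    refine ⟨i0, y, ?_, ?_, ?_⟩
    · rw [EuclideanSpace.norm_eq]
      have hsq : ∑ j, ‖y j‖ ^ 2 = ρ ^ 2 := by
        have hterm : ∀ j, ‖y j‖ ^ 2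
            = if j = i0 then (ρ / s) ^ 2 else (ρ / (s * ((D:ℝ) - 1))) ^ 2 := by
          intro j
          show ‖(if j = i0 then ρ / s else -(ρ / (s * ((D:ℝ) - 1))))‖ ^ 2 = _
          by_cases h : j = i0
          · rw [if_pos h, if_pos h, Real.norm_eq_abs, sq_abs]
          · rw [if_neg h, if_neg h, Real.norm_eq_abs, sq_abs, neg_sq]
        rw [Finset.sum_congr rfl (fun j _ => hterm j), hkey, div_pow, div_pow,
          mul_pow, hs2]
        field_simp
        ring
      rw [hsq, Real.sqrt_sq hρ.le]
    · show ∑ j : Fin D, (if j = i0 then ρ / s else -(ρ / (s * ((D:ℝ) - 1)))) = 0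
      rw [hkey]
      field_simp
      try ring
    · show B = Real.exp (y i0) / ∑ j, Real.exp (y j)
      have hy0 : y i0 = ρ / s := by
        show (if i0 = i0 then ρ / s else -(ρ / (s * ((D:ℝ) - 1)))) = ρ / s
        rw [if_pos rfl]
      have hsum_exp : ∑ j, Real.exp (y j)
          = Real.exp (ρ / s) + ((D:ℝ) - 1) * Real.exp (-(ρ / (s * ((D:ℝ) - 1)))) := by
        have hterm : ∀ j, Real.exp (y j) = if j = i0 then Real.exp (ρ / s)
            else Real.exp (-(ρ / (s * ((D:ℝ) - 1)))) := by
          intro j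
          show Real.exp (if j = i0 then ρ / s else -(ρ / (s * ((D:ℝ) - 1)))) = _
          by_cases h : j = i0
          · rw [if_pos h, if_pos h]
          · rw [if_neg h, if_neg h]
        rw [Finset.sum_congr rfl (fun j _ => hterm j), hkey]
      rw [hy0, hsum_exp]
      have hE : Real.exp (-(ρ / (s * ((D:ℝ) - 1))))
          = Real.exp (-(s * ρ)) * Real.exp (ρ / s) := by
        rw [← Real.exp_add]
        congr 1
        have hss : s * s * ((D:ℝ) - 1) = (D:ℝ) := by
          have : s * s = (D:ℝ) / ((D:ℝ) - 1) := by nlinarith [hs2]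
          rw [this]; field_simp
        field_simp
        linear_combination hss
      rw [hE, hB_def]
      have hEp : (0:ℝ) < Real.exp (ρ / s) := Real.exp_pos _
      rw [div_eq_div_iff (by positivity) (by positivity)]
      ring
  constructor
  · -- upper bound
    rintro r ⟨i, x, hnorm, hsum, rfl⟩
    -- sum of squares bound
    have hnormsq : ∑ j, (x j) ^ 2 ≤ ρ ^ 2 := by
      have h1 : Real.sqrt (∑ j, ‖x j‖ ^ 2) ≤ ρ := by
        rw [← EuclideanSpace.norm_eq]; exact hnorm
      have h2 : ∑ j, ‖x j‖ ^ 2 ≤ ρ ^ 2 := by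
        have hnn : (0:ℝ) ≤ ∑ j, ‖x j‖ ^ 2 :=
          Finset.sum_nonneg fun j _ => sq_nonneg _
        nlinarith [Real.sq_sqrt hnn, Real.sqrt_nonneg (∑ j, ‖x j‖ ^ 2)]
      simpa [Real.norm_eq_abs, sq_abs] using h2
    set t : Finset (Fin D) := Finset.univ.erase i with ht_def
    have hcard : (t.card : ℝ) = (D:ℝ) - 1 := by
      rw [ht_def, Finset.card_erase_of_mem (Finset.mem_univ i), Finset.card_univ,
        Fintype.card_fin]
      have : 1 ≤ D := by omega
      push_cast [this]; ring
    have hsum_t : ∑ j ∈ t, x j = -(x i) := by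
      have := Finset.add_sum_erase Finset.univ x (Finset.mem_univ i)
      rw [hsum] at this; linarith [this]
    -- Cauchy–Schwarz: x i ≤ ρ / s
    have hxi : x i ≤ ρ / s := by
      have hcs : (∑ j ∈ t, x j) ^ 2 ≤ t.card * ∑ j ∈ t, (x j) ^ 2 :=
        sq_sum_le_card_mul_sum_sq
      have hsplit : (x i) ^ 2 + ∑ j ∈ t, (x j) ^ 2 = ∑ j, (x j) ^ 2 :=
        Finset.add_sum_erase Finset.univ (fun j => (x j) ^ 2) (Finset.mem_univ i)
      rw [hsum_t, hcard] at hcs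
      have hsq : (x i) ^ 2 ≤ (ρ / s) ^ 2 := by
        have hρs : (ρ / s) ^ 2 = ρ ^ 2 * (((D:ℝ) - 1) / (D:ℝ)) := by
          rw [div_pow, hs2]; field_simp
        rw [hρs]
        have h3 : ∑ j ∈ t, (x j) ^ 2 ≤ ρ ^ 2 - (x i) ^ 2 := by linarith
        rw [mul_div_assoc', le_div_iff₀ hDpos]
        nlinarith
      nlinarith [div_pos hρ hs_pos]
    -- Jensen
    have hw : ∀ j ∈ t, (0:ℝ) ≤ 1 / ((D:ℝ) - 1) := fun j _ => by positivity
    have hw1 : ∑ j ∈ t, 1 / ((D:ℝ) - 1) = 1 := by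
      rw [Finset.sum_const, nsmul_eq_mul, hcard]; field_simp
    have hjensen := convexOn_exp.map_sum_le hw hw1
      (fun j _ => Set.mem_univ (x j - x i))
    simp only [smul_eq_mul] at hjensen
    have hin : ∑ j ∈ t, 1 / ((D:ℝ) - 1) * (x j - x i) = -((D:ℝ) * x i / ((D:ℝ) - 1)) := by
      rw [← Finset.mul_sum, Finset.sum_sub_distrib, hsum_t, Finset.sum_const,
        nsmul_eq_mul, hcard]
      field_simp; ring
    rw [hin] at hjensen
    set T : ℝ := ∑ j ∈ t, Real.exp (x j - x i) with hT_def
    have hT1 : ((D:ℝ) - 1) * Real.exp (-(s * ρ)) ≤ T := by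
      have harg : -(s * ρ) ≤ -((D:ℝ) * x i / ((D:ℝ) - 1)) := by
        have hDd : (D:ℝ) / ((D:ℝ) - 1) = s ^ 2 := hs2.symm
        have : (D:ℝ) * x i / ((D:ℝ) - 1) ≤ s * ρ := by
          have h1 : (D:ℝ) * x i / ((D:ℝ) - 1) = s ^ 2 * x i := by
            rw [← hDd]; ring
          rw [h1]
          have := mul_le_mul_of_nonneg_left hxi (le_of_lt (mul_pos hs_pos hs_pos))
          calc s ^ 2 * x i ≤ s ^ 2 * (ρ / s) := by nlinarith
            _ = s * ρ := by field_simp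
        linarith
      calc ((D:ℝ) - 1) * Real.exp (-(s * ρ))
          ≤ ((D:ℝ) - 1) * Real.exp (-((D:ℝ) * x i / ((D:ℝ) - 1))) := by
            exact mul_le_mul_of_nonneg_left (Real.exp_le_exp.mpr harg) (le_of_lt hDm)
        _ ≤ ((D:ℝ) - 1) * ((1 / ((D:ℝ) - 1)) * T) := by
            apply mul_le_mul_of_nonneg_left _ (le_of_lt hDm)
            simpa [hT_def, Finset.mul_sum] using hjensen
        _ = T := by field_simp
    -- softmax value
    have hdenom : ∑ j, Real.exp (x j) = Real.exp (x i) * (1 + T) := by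
      have h1 : ∑ j, Real.exp (x j) = Real.exp (x i) + ∑ j ∈ t, Real.exp (x j) :=
        (Finset.add_sum_erase Finset.univ (fun j => Real.exp (x j))
          (Finset.mem_univ i)).symm
      have h2 : ∑ j ∈ t, Real.exp (x j) = Real.exp (x i) * T := by
        rw [hT_def, Finset.mul_sum]
        refine Finset.sum_congr rfl (fun j _ => ?_)
        rw [← Real.exp_add]; ring_nf
      rw [h1, h2]; ring
    have hval : softmax D x i = 1 / (1 + T) := by
      show Real.exp (x i) / ∑ j, Real.exp (x j) = 1 / (1 + T)
      rw [hdenom, ← div_div, div_self (Real.exp_ne_zero _)]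
    rw [hval, hB_def]
    apply one_div_le_one_div_of_le
    · nlinarith
    · linarith
  · intro b hb
    exact hb hmem
end

section
/- Let $D \ge 2$ and let $x, y \in \mathbb{R}^D$ with $\sum_j x_j = \sum_j y_j = 0$. Then the softmax satisfies $\|\sigma(x) - \sigma(y)\| \le \frac{D}{(D-1)^2} \exp\left(2\sqrt{\tfrac{D}{D-1}} \max(\|x\|, \|y\|)\right) \|x - y\|$. -/
open Finset

lemma coord_abs_le_norm {D : ℕ} (x : EuclideanSpace ℝ (Fin D)) (i : Fin D) :
    |x i| ≤ ‖x‖ := by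
  rw [EuclideanSpace.norm_eq]
  rw [← Real.sqrt_sq (abs_nonneg (x i))]
  apply Real.sqrt_le_sqrt
  rw [sq_abs]
  calc x i ^ 2 ≤ ∑ j, x j ^ 2 :=
        Finset.single_le_sum (f := fun j => x j ^ 2) (fun j _ => sq_nonneg _) (mem_univ i)
    _ = ∑ j, ‖x j‖ ^ 2 := by simp [Real.norm_eq_abs, sq_abs]

lemma norm_le_of_sq_sum_le {D : ℕ} (v : EuclideanSpace ℝ (Fin D)) {c : ℝ} (hc : 0 ≤ c)
    (h : ∑ i, v i ^ 2 ≤ c ^ 2) : ‖v‖ ≤ c := by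
  rw [EuclideanSpace.norm_eq]
  rw [← Real.sqrt_sq hc]
  apply Real.sqrt_le_sqrt
  simpa [Real.norm_eq_abs, sq_abs] using h

lemma norm_sq_eq {D : ℕ} (v : EuclideanSpace ℝ (Fin D)) : ‖v‖ ^ 2 = ∑ i, v i ^ 2 := by
  rw [EuclideanSpace.norm_eq, Real.sq_sqrt (by positivity)]
  simp [Real.norm_eq_abs, sq_abs]

-- Lipschitz bounds for exp and exp - id on [-M, M]
lemma exp_lip {M s t : ℝ} (hs : |s| ≤ M) (ht : |t| ≤ M) :
    |Real.exp s - Real.exp t| ≤ Real.exp M * |s - t| := by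
  wlog h : t ≤ s generalizing s t
  · have := this ht hs (le_of_not_ge h)
    rwa [abs_sub_comm, abs_sub_comm t s] at this
  rw [abs_of_nonneg (sub_nonneg.mpr (Real.exp_le_exp.mpr h)), abs_of_nonneg (sub_nonneg.mpr h)]
  have hsM : s ≤ M := (le_abs_self s).trans hs
  have key : Real.exp s - Real.exp t ≤ Real.exp s * (s - t) := by
    have h1 : 1 - (s - t) ≤ Real.exp (-(s - t)) := by
      have := Real.add_one_le_exp (-(s - t)); linarith
    have h2 : Real.exp s * (1 - (s - t)) ≤ Real.exp s * Real.exp (-(s - t)) :=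
      mul_le_mul_of_nonneg_left h1 (Real.exp_pos s).le
    rw [← Real.exp_add] at h2
    have : Real.exp (s + -(s - t)) = Real.exp t := by ring_nf
    rw [this] at h2; nlinarith
  calc Real.exp s - Real.exp t ≤ Real.exp s * (s - t) := key
    _ ≤ Real.exp M * (s - t) :=
      mul_le_mul_of_nonneg_right (Real.exp_le_exp.mpr hsM) (by linarith)

lemma exp_sub_id_lip {M s t : ℝ} (hs : |s| ≤ M) (ht : |t| ≤ M) :
    |(Real.exp s - s) - (Real.exp t - t)| ≤ (Real.exp M - 1) * |s - t| := by
  wlog h : t ≤ s generalizing s t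
  · have := this ht hs (le_of_not_ge h)
    rwa [abs_sub_comm, abs_sub_comm t s] at this
  have hsM : s ≤ M := (le_abs_self s).trans hs
  have htM : -M ≤ t := neg_le_of_abs_le ht
  rw [abs_of_nonneg (sub_nonneg.mpr h)]
  have hub : Real.exp s - Real.exp t ≤ Real.exp M * (s - t) := by
    have := exp_lip hs ht
    rw [abs_of_nonneg (sub_nonneg.mpr (Real.exp_le_exp.mpr h)),
      abs_of_nonneg (sub_nonneg.mpr h)] at this
    exact this
  have hlb : Real.exp t * (s - t) ≤ Real.exp s - Real.exp t := by
    have h1 : (s - t) + 1 ≤ Real.exp (s - t) := Real.add_one_le_exp _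
    have h2 : Real.exp t * ((s - t) + 1) ≤ Real.exp t * Real.exp (s - t) :=
      mul_le_mul_of_nonneg_left h1 (Real.exp_pos t).le
    rw [← Real.exp_add] at h2
    have : Real.exp (t + (s - t)) = Real.exp s := by ring_nf
    rw [this] at h2; nlinarith
  have hexpM : Real.exp (-M) + Real.exp M ≥ 2 := by
    have h1 := Real.add_one_le_exp (-M)
    have h2 := Real.add_one_le_exp M
    linarith
  have hlb2 : Real.exp (-M) * (s - t) ≤ Real.exp s - Real.exp t := by
    calc Real.exp (-M) * (s - t) ≤ Real.exp t * (s - t) :=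
        mul_le_mul_of_nonneg_right (Real.exp_le_exp.mpr htM) (by linarith)
      _ ≤ _ := hlb
  rw [abs_le]
  constructor
  · nlinarith [sub_nonneg.mpr h]
  · nlinarith

set_option maxHeartbeats 1000000 in
/-- Local Lipschitz continuity of the softmax on the hyperplane `𝟙^⊥`. -/
theorem softmax_local_lipschitz (D : ℕ) (hD : 2 ≤ D)
    (x y : EuclideanSpace ℝ (Fin D))
    (hx : ∑ j, x j = 0) (hy : ∑ j, y j = 0) :
    ‖softmax D x - softmax D y‖ ≤
      (D : ℝ) / ((D : ℝ) - 1) ^ 2 *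
        Real.exp (2 * Real.sqrt ((D : ℝ) / ((D : ℝ) - 1)) * max ‖x‖ ‖y‖) * ‖x - y‖ := by
  set M := max ‖x‖ ‖y‖ with hMdef
  have hM0 : 0 ≤ M := le_trans (norm_nonneg x) (le_max_left _ _)
  have hxM : ∀ i, |x i| ≤ M := fun i => (coord_abs_le_norm x i).trans (le_max_left _ _)
  have hyM : ∀ i, |y i| ≤ M := fun i => (coord_abs_le_norm y i).trans (le_max_right _ _)
  set Sx := ∑ j, Real.exp (x j) with hSxdef
  set Sy := ∑ j, Real.exp (y j) with hSydef
  have hD0 : (0:ℝ) < D := by positivity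
  have hDS : ∀ (z : EuclideanSpace ℝ (Fin D)), ∑ j, z j = 0 →
      (D:ℝ) ≤ ∑ j, Real.exp (z j) := by
    intro z hz
    calc (D:ℝ) = ∑ _j : Fin D, (1:ℝ) + ∑ j, z j := by simp [hz]
      _ = ∑ j, (z j + 1) := by rw [← Finset.sum_add_distrib]; simp [add_comm]
      _ ≤ ∑ j, Real.exp (z j) := Finset.sum_le_sum fun j _ => Real.add_one_le_exp (z j)
  have hSxD : (D:ℝ) ≤ Sx := hDS x hx
  have hSyD : (D:ℝ) ≤ Sy := hDS y hy
  have hSx0 : 0 < Sx := lt_of_lt_of_le hD0 hSxD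
  have hSy0 : 0 < Sy := lt_of_lt_of_le hD0 hSyD
  set E := Real.exp M with hEdef
  have hE1 : 1 ≤ E := Real.one_le_exp hM0
  -- decomposition
  set A : EuclideanSpace ℝ (Fin D) :=
    WithLp.toLp 2 (fun i => (Real.exp (x i) - Real.exp (y i)) / Sx) with hAdef
  set B : EuclideanSpace ℝ (Fin D) :=
    WithLp.toLp 2 (fun i => Real.exp (y i) / Sy * ((Sy - Sx) / Sx)) with hBdef
  have hdecomp : softmax D x - softmax D y = A + B := by
    ext i
    show softmax D x i - softmax D y i = A i + B i
    simp only [softmax, hAdef, hBdef, ← hSxdef, ← hSydef, PiLp.toLp_apply]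
    field_simp
    ring
  -- bound on sum of squares of softmax y
  have hσsum : ∑ i, Real.exp (y i) / Sy = 1 := by
    rw [← Finset.sum_div, ← hSydef, div_self hSy0.ne']
  have hσsq : ∑ i, (Real.exp (y i) / Sy) ^ 2 ≤ E / D := by
    calc ∑ i, (Real.exp (y i) / Sy) ^ 2
        ≤ ∑ i, (E / D) * (Real.exp (y i) / Sy) := by
          apply Finset.sum_le_sum
          intro i _
          have h1 : Real.exp (y i) / Sy ≤ E / D :=
            div_le_div₀ (by positivity) (Real.exp_le_exp.mpr ((le_abs_self _).trans (hyM i)))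
              hD0 hSyD
          have h2 : 0 ≤ Real.exp (y i) / Sy := by positivity
          nlinarith
      _ = E / D := by rw [← Finset.mul_sum, hσsum, mul_one]
  -- squared norm of x - y
  have hN2 : ∑ i, (x i - y i)^2 = ‖x - y‖^2 := by
    rw [norm_sq_eq]; rfl
  -- bound |Sy - Sx|
  have hSdiff : |Sy - Sx| ≤ (E - 1) * Real.sqrt D * ‖x - y‖ := by
    have h1 : Sy - Sx = ∑ j, ((Real.exp (y j) - y j) - (Real.exp (x j) - x j)) := by
      rw [hSxdef, hSydef, Finset.sum_sub_distrib, Finset.sum_sub_distrib,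
        Finset.sum_sub_distrib, hx, hy]
      ring
    rw [h1]
    calc |∑ j, ((Real.exp (y j) - y j) - (Real.exp (x j) - x j))|
        ≤ ∑ j, |(Real.exp (y j) - y j) - (Real.exp (x j) - x j)| :=
          Finset.abs_sum_le_sum_abs _ _
      _ ≤ ∑ j, (E - 1) * |y j - x j| :=
          Finset.sum_le_sum fun j _ => exp_sub_id_lip (hyM j) (hxM j)
      _ = (E - 1) * ∑ j, |x j - y j| := by
          rw [← Finset.mul_sum]
          exact congrArg _ (Finset.sum_congr rfl fun j _ => abs_sub_comm _ _)
      _ ≤ (E - 1) * (Real.sqrt D * ‖x - y‖) := by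
          apply mul_le_mul_of_nonneg_left _ (by linarith)
          have hcs : (∑ j, |x j - y j|) ^ 2 ≤ (D:ℝ) * ∑ j, (x j - y j) ^ 2 := by
            have := sq_sum_le_card_mul_sum_sq (s := Finset.univ)
              (f := fun j : Fin D => |x j - y j|)
            simpa [sq_abs] using this
          rw [hN2] at hcs
          have h0 : 0 ≤ ∑ j, |x j - y j| := Finset.sum_nonneg fun j _ => abs_nonneg _
          nlinarith [Real.sq_sqrt hD0.le, Real.sqrt_nonneg (D:ℝ), norm_nonneg (x - y),
            mul_nonneg (Real.sqrt_nonneg (D:ℝ)) (norm_nonneg (x - y))]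
      _ = (E - 1) * Real.sqrt D * ‖x - y‖ := by ring
  -- norm bounds on A and B
  have hnA : ‖A‖ ≤ E / D * ‖x - y‖ := by
    apply norm_le_of_sq_sum_le _ (by positivity)
    show ∑ i, ((Real.exp (x i) - Real.exp (y i)) / Sx) ^ 2 ≤ _
    calc ∑ i, ((Real.exp (x i) - Real.exp (y i)) / Sx) ^ 2
        ≤ ∑ i, (E / D) ^ 2 * (x i - y i) ^ 2 := by
          apply Finset.sum_le_sum
          intro i _
          have h1 : |Real.exp (x i) - Real.exp (y i)| ≤ E * |x i - y i| :=
            exp_lip (hxM i) (hyM i)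
          have h2 : |(Real.exp (x i) - Real.exp (y i)) / Sx| ≤ E / D * |x i - y i| := by
            rw [abs_div, abs_of_pos hSx0]
            calc |Real.exp (x i) - Real.exp (y i)| / Sx
                ≤ (E * |x i - y i|) / D := div_le_div₀ (by positivity) h1 hD0 hSxD
              _ = E / D * |x i - y i| := by ring
          calc ((Real.exp (x i) - Real.exp (y i)) / Sx) ^ 2
              = |(Real.exp (x i) - Real.exp (y i)) / Sx| ^ 2 := (sq_abs _).symm
            _ ≤ (E / D * |x i - y i|) ^ 2 := pow_le_pow_left₀ (abs_nonneg _) h2 2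
            _ = (E / D) ^ 2 * (x i - y i) ^ 2 := by rw [mul_pow, sq_abs]
      _ = (E / D) ^ 2 * ∑ i, (x i - y i) ^ 2 := by rw [← Finset.mul_sum]
      _ = (E / D * ‖x - y‖) ^ 2 := by rw [hN2]; ring
  have hnB : ‖B‖ ≤ Real.sqrt E * (E - 1) / D * ‖x - y‖ := by
    apply norm_le_of_sq_sum_le _ (mul_nonneg (div_nonneg
      (mul_nonneg (Real.sqrt_nonneg E) (by linarith)) hD0.le) (norm_nonneg _))
    show ∑ i, (Real.exp (y i) / Sy * ((Sy - Sx) / Sx)) ^ 2 ≤ _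
    have hc : ((Sy - Sx) / Sx) ^ 2 ≤ (E - 1)^2 * ‖x - y‖^2 * (1 / D) := by
      have h1 : |(Sy - Sx) / Sx| ≤ (E - 1) * Real.sqrt D * ‖x - y‖ / D := by
        rw [abs_div, abs_of_pos hSx0]
        exact div_le_div₀ (mul_nonneg (mul_nonneg (by linarith)
          (Real.sqrt_nonneg _)) (norm_nonneg _)) hSdiff hD0 hSxD
      have h2 : ((Sy - Sx) / Sx) ^ 2 ≤ ((E - 1) * Real.sqrt D * ‖x - y‖ / D)^2 := by
        rw [← sq_abs ((Sy - Sx) / Sx)]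
        exact pow_le_pow_left₀ (abs_nonneg _) h1 2
      have h3 : ((E - 1) * Real.sqrt D * ‖x - y‖ / D)^2
          = (E-1)^2 * ‖x-y‖^2 * (Real.sqrt D ^ 2 / (D:ℝ)^2) := by ring
      have h4 : Real.sqrt D ^ 2 / (D:ℝ)^2 = 1 / D := by
        rw [Real.sq_sqrt hD0.le, sq, ← div_div, div_self hD0.ne']
      rw [h3, h4] at h2
      exact h2
    calc ∑ i, (Real.exp (y i) / Sy * ((Sy - Sx) / Sx)) ^ 2
        = ((Sy - Sx) / Sx) ^ 2 * ∑ i, (Real.exp (y i) / Sy) ^ 2 := by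
          rw [Finset.mul_sum]
          exact Finset.sum_congr rfl fun i _ => by ring
      _ ≤ ((E - 1)^2 * ‖x - y‖^2 * (1 / D)) * (E / D) :=
          mul_le_mul hc hσsq (Finset.sum_nonneg fun i _ => sq_nonneg _) (by positivity)
      _ = (Real.sqrt E * (E - 1) / D * ‖x - y‖) ^ 2 := by
          have hsE : Real.sqrt E ^ 2 = E := Real.sq_sqrt (by positivity)
          have h5 : (Real.sqrt E * (E - 1) / D * ‖x - y‖) ^ 2
              = Real.sqrt E ^ 2 * ((E-1)^2 * ‖x-y‖^2 * (1/D) * (1/D)) := by ring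
          rw [h5, hsE]; ring
  -- combine
  have hmain : ‖softmax D x - softmax D y‖ ≤ (E + Real.sqrt E * (E - 1)) / D * ‖x - y‖ := by
    rw [hdecomp]
    calc ‖A + B‖ ≤ ‖A‖ + ‖B‖ := norm_add_le A B
      _ ≤ E / D * ‖x - y‖ + Real.sqrt E * (E - 1) / D * ‖x - y‖ := add_le_add hnA hnB
      _ = (E + Real.sqrt E * (E - 1)) / D * ‖x - y‖ := by ring
  -- final scalar inequality
  have hD2 : (2:ℝ) ≤ D := by exact_mod_cast hD
  have hb1 : 1 ≤ Real.sqrt ((D:ℝ) / ((D:ℝ) - 1)) := by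
    have h1 : (1:ℝ) ≤ (D:ℝ) / ((D:ℝ) - 1) := by
      rw [le_div_iff₀ (by linarith)]; linarith
    calc (1:ℝ) = Real.sqrt 1 := by simp
      _ ≤ _ := Real.sqrt_le_sqrt h1
  have hconst : (E + Real.sqrt E * (E - 1)) / D ≤
      (D : ℝ) / ((D : ℝ) - 1) ^ 2 * Real.exp (2 * Real.sqrt ((D:ℝ) / ((D:ℝ) - 1)) * M) := by
    have ht1 : 1 ≤ Real.sqrt E := by
      calc (1:ℝ) = Real.sqrt 1 := by simp
        _ ≤ _ := Real.sqrt_le_sqrt hE1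
    have htE : Real.sqrt E ^ 2 = E := Real.sq_sqrt (by positivity)
    have step1 : E + Real.sqrt E * (E - 1) ≤ E ^ 2 := by
      have key : 0 ≤ Real.sqrt E * (Real.sqrt E - 1)^2 * (Real.sqrt E + 1) := by positivity
      nlinarith [key, htE]
    have step2 : E ^ 2 = Real.exp (2 * M) := by
      rw [hEdef, ← Real.exp_nat_mul]; norm_num
    have step3 : Real.exp (2 * M) ≤ Real.exp (2 * Real.sqrt ((D:ℝ) / ((D:ℝ) - 1)) * M) := by
      apply Real.exp_le_exp.mpr
      nlinarith
    have step4 : ((D:ℝ))⁻¹ ≤ (D : ℝ) / ((D : ℝ) - 1) ^ 2 := by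
      rw [inv_eq_one_div, div_le_div_iff₀ hD0 (by nlinarith)]
      nlinarith
    calc (E + Real.sqrt E * (E - 1)) / D
        ≤ Real.exp (2 * Real.sqrt ((D:ℝ) / ((D:ℝ) - 1)) * M) / D := by
          have hab : E + Real.sqrt E * (E - 1)
              ≤ Real.exp (2 * Real.sqrt ((D:ℝ) / ((D:ℝ) - 1)) * M) :=
            le_trans step1 (step2 ▸ step3)
          gcongr
      _ ≤ (D : ℝ) / ((D : ℝ) - 1) ^ 2 * Real.exp (2 * Real.sqrt ((D:ℝ) / ((D:ℝ) - 1)) * M) := by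
          rw [div_eq_mul_inv, mul_comm]
          exact mul_le_mul_of_nonneg_right step4 (Real.exp_pos _).le
  calc ‖softmax D x - softmax D y‖ ≤ (E + Real.sqrt E * (E - 1)) / D * ‖x - y‖ := hmain
    _ ≤ (D : ℝ) / ((D : ℝ) - 1) ^ 2 *
        Real.exp (2 * Real.sqrt ((D : ℝ) / ((D : ℝ) - 1)) * M) * ‖x - y‖ :=
      mul_le_mul_of_nonneg_right hconst (norm_nonneg _)
end

section
/- Let $D \ge 2$ and $x, y \in \mathbb{R}^D$ with $\sum_j x_j = \sum_j y_j = 0$. Let $\nabla\sigma(z) = \mathrm{Diag}(\sigma(z)) - \sigma(z)\sigma(z)^\top$ be the softmax Jacobian. Then $\|\nabla\sigma(x) - \nabla\sigma(y)\|_{op} \le \frac{2D^2}{(D-1)^3} \exp\left(3\sqrt{\tfrac{D}{D-1}} \max(\|x\|,\|y\|)\right) \|x-y\|$. -/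
open Finset Matrix

/-- The softmax Jacobian `∇σ(z) = Diag(σ(z)) - σ(z)σ(z)ᵀ`. -/
noncomputable def softmaxJacobian (D : ℕ) (z : EuclideanSpace ℝ (Fin D)) :
    Matrix (Fin D) (Fin D) ℝ :=
  Matrix.diagonal (fun i => softmax D z i) -
    Matrix.vecMulVec (fun i => softmax D z i) (fun i => softmax D z i)

section SoftmaxAux

variable {D : ℕ}

private lemma abs_exp_sub_exp_le' {a b M : ℝ} (ha : a ≤ M) (hb : b ≤ M) :
    |Real.exp a - Real.exp b| ≤ Real.exp M * |a - b| := by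
  wlog h : b ≤ a generalizing a b
  · have := this hb ha (le_of_not_ge h)
    rwa [abs_sub_comm, abs_sub_comm b a] at this
  rw [abs_of_nonneg (sub_nonneg.2 (Real.exp_le_exp.2 h)), abs_of_nonneg (sub_nonneg.2 h)]
  have h1 : Real.exp a - Real.exp b ≤ Real.exp a * (a - b) := by
    have h2 : Real.exp b = Real.exp a * Real.exp (b - a) := by
      rw [← Real.exp_add]; ring_nf
    nlinarith [Real.add_one_le_exp (b - a), Real.exp_pos a]
  have h3 : Real.exp a ≤ Real.exp M := Real.exp_le_exp.2 ha
  nlinarith [sub_nonneg.2 h]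

private lemma abs_coord_le_norm' (z : EuclideanSpace ℝ (Fin D)) (i : Fin D) : |z i| ≤ ‖z‖ := by
  rw [EuclideanSpace.norm_eq, show |z i| = Real.sqrt (z i ^ 2) from (Real.sqrt_sq_eq_abs _).symm]
  apply Real.sqrt_le_sqrt
  calc z i ^ 2 ≤ ∑ j, z j ^ 2 :=
        Finset.single_le_sum (f := fun j => z j ^ 2) (fun j _ => sq_nonneg _) (mem_univ i)
    _ = ∑ j, ‖z j‖ ^ 2 := by simp [Real.norm_eq_abs, sq_abs]

private lemma sum_abs_le_sqrt_mul_norm' (z : EuclideanSpace ℝ (Fin D)) :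
    ∑ i, |z i| ≤ Real.sqrt D * ‖z‖ := by
  have h := sq_sum_le_card_mul_sum_sq (s := univ) (f := fun i => |z i|)
  simp only [card_univ, Fintype.card_fin, sq_abs] at h
  have h1 : ∑ i, |z i| = Real.sqrt ((∑ i, |z i|) ^ 2) := by
    rw [Real.sqrt_sq (by positivity)]
  rw [h1, EuclideanSpace.norm_eq]
  calc Real.sqrt ((∑ i, |z i|) ^ 2) ≤ Real.sqrt ((D : ℝ) * ∑ i, z i ^ 2) :=
        Real.sqrt_le_sqrt (by exact_mod_cast h)
    _ = Real.sqrt D * Real.sqrt (∑ i, ‖z i‖ ^ 2) := by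
        rw [Real.sqrt_mul (by positivity)]
        simp [Real.norm_eq_abs, sq_abs]

private lemma norm_le_mul_norm_of_abs_le' (u v : EuclideanSpace ℝ (Fin D)) (c : ℝ) (hc : 0 ≤ c)
    (h : ∀ i, |u i| ≤ c * |v i|) : ‖u‖ ≤ c * ‖v‖ := by
  rw [EuclideanSpace.norm_eq, EuclideanSpace.norm_eq]
  rw [show c * Real.sqrt (∑ i, ‖v i‖ ^ 2) = Real.sqrt (c ^ 2 * ∑ i, ‖v i‖ ^ 2) by
    rw [Real.sqrt_mul (by positivity), Real.sqrt_sq hc]]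
  apply Real.sqrt_le_sqrt
  rw [Finset.mul_sum]
  apply Finset.sum_le_sum
  intro i _
  have := h i
  simp only [Real.norm_eq_abs]
  calc |u i| ^ 2 ≤ (c * |v i|) ^ 2 := by nlinarith [abs_nonneg (u i), abs_nonneg (v i)]
    _ = c ^ 2 * |v i| ^ 2 := by ring

private lemma norm_le_sqrt_of_sq_bound' (u : EuclideanSpace ℝ (Fin D)) (c : ℝ)
    (h : ∑ i, u i ^ 2 ≤ c) : ‖u‖ ≤ Real.sqrt c := by
  rw [EuclideanSpace.norm_eq]
  apply Real.sqrt_le_sqrt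
  simpa [Real.norm_eq_abs, sq_abs] using h

private lemma clm_diagonal_le' (d : Fin D → ℝ) (C : ℝ) (hC : 0 ≤ C) (h : ∀ i, |d i| ≤ C) :
    ‖Matrix.toEuclideanCLM (𝕜 := ℝ) (Matrix.diagonal d)‖ ≤ C := by
  apply ContinuousLinearMap.opNorm_le_bound _ hC
  intro v
  apply norm_le_mul_norm_of_abs_le' _ v C hC
  intro i
  have hco : (Matrix.toEuclideanCLM (𝕜 := ℝ) (Matrix.diagonal d) v) i = d i * v i := by
    show (Matrix.diagonal d *ᵥ (fun j => v j)) i = _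
    simp [Matrix.mulVec_diagonal]
  rw [hco, abs_mul]
  exact mul_le_mul_of_nonneg_right (h i) (abs_nonneg _)

private lemma clm_vecMulVec_le' (u w : EuclideanSpace ℝ (Fin D)) :
    ‖Matrix.toEuclideanCLM (𝕜 := ℝ) (Matrix.vecMulVec (fun i => u i) (fun i => w i))‖
      ≤ ‖u‖ * ‖w‖ := by
  apply ContinuousLinearMap.opNorm_le_bound _ (by positivity)
  intro v
  have hcs : |∑ j, w j * v j| ≤ ‖w‖ * ‖v‖ := by
    have h1 : inner (𝕜 := ℝ) w v = ∑ i, w i * v i := by simp [PiLp.inner_apply, mul_comm]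
    rw [← h1]
    exact abs_real_inner_le_norm w v
  have key : ‖Matrix.toEuclideanCLM (𝕜 := ℝ)
      (Matrix.vecMulVec (fun i => u i) (fun i => w i)) v‖ ≤ |∑ j, w j * v j| * ‖u‖ := by
    apply norm_le_mul_norm_of_abs_le' _ u _ (abs_nonneg _)
    intro i
    have hco : (Matrix.toEuclideanCLM (𝕜 := ℝ)
        (Matrix.vecMulVec (fun i => u i) (fun i => w i)) v) i
        = u i * (∑ j, w j * v j) := by
      show (Matrix.vecMulVec (fun i => u i) (fun i => w i) *ᵥ (fun j => v j)) i = _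
      simp [Matrix.vecMulVec_apply, Matrix.mulVec, dotProduct, Finset.mul_sum, mul_assoc]
    rw [hco, abs_mul, mul_comm]
  calc ‖_‖ ≤ |∑ j, w j * v j| * ‖u‖ := key
    _ ≤ ‖w‖ * ‖v‖ * ‖u‖ := mul_le_mul_of_nonneg_right hcs (norm_nonneg _)
    _ = ‖u‖ * ‖w‖ * ‖v‖ := by ring

private lemma jac_sub_decomp' (D : ℕ) (x y : EuclideanSpace ℝ (Fin D)) :
    softmaxJacobian D x - softmaxJacobian D y =
      Matrix.diagonal (fun i => (softmax D x - softmax D y) i)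
        - Matrix.vecMulVec (fun i => softmax D x i) (fun i => (softmax D x - softmax D y) i)
        - Matrix.vecMulVec (fun i => (softmax D x - softmax D y) i)
            (fun i => softmax D y i) := by
  ext i j
  by_cases h : i = j <;>
    simp [softmaxJacobian, Matrix.vecMulVec_apply, Matrix.sub_apply, Matrix.diagonal, h] <;>
    ring

private lemma arith_aux' (t q : ℝ) (h1 : 1 < q) (h : 25 ≤ (q - 1) ^ 2 * t) :
    1 + 5 / Real.sqrt t ≤ q := by
  have hq : 0 < q - 1 := by linarith
  have h2 : 5 / (q - 1) ≤ Real.sqrt t := by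
    rw [show (5 : ℝ) / (q - 1) = Real.sqrt ((5 / (q - 1)) ^ 2) from
      (Real.sqrt_sq (by positivity)).symm]
    apply Real.sqrt_le_sqrt
    rw [div_pow, div_le_iff₀ (by positivity)]
    nlinarith
  have hst : 0 < Real.sqrt t := lt_of_lt_of_le (by positivity) h2
  have h3 : 5 / Real.sqrt t ≤ q - 1 := by
    rw [div_le_iff₀ hst]
    calc (5 : ℝ) = (5 / (q - 1)) * (q - 1) := by field_simp
      _ ≤ Real.sqrt t * (q - 1) := mul_le_mul_of_nonneg_right h2 hq.le
      _ = (q - 1) * Real.sqrt t := mul_comm _ _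
  linarith

private lemma arith' (D : ℕ) (hD : 2 ≤ D) :
    1 + 5 / Real.sqrt D ≤ 2 * (D : ℝ) ^ 3 / ((D : ℝ) - 1) ^ 3 := by
  have hD1 : (1 : ℝ) ≤ (D : ℝ) - 1 := by
    have : (2 : ℝ) ≤ D := by exact_mod_cast hD
    linarith
  rcases le_or_gt 25 D with h | h
  · have hden : (0 : ℝ) < ((D : ℝ) - 1) ^ 3 := by positivity
    have h1 : (5 : ℝ) ≤ Real.sqrt D := by
      rw [show (5 : ℝ) = Real.sqrt 25 by
        rw [show (25 : ℝ) = 5 ^ 2 by norm_num, Real.sqrt_sq (by norm_num)]]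
      exact Real.sqrt_le_sqrt (by exact_mod_cast h)
    have h2 : 5 / Real.sqrt D ≤ 1 := by
      rw [div_le_one (by linarith)]; exact h1
    have h4 : (2 : ℝ) ≤ 2 * (D : ℝ) ^ 3 / ((D : ℝ) - 1) ^ 3 := by
      rw [le_div_iff₀ hden]
      nlinarith [pow_le_pow_left₀ (by linarith : (0:ℝ) ≤ (D:ℝ) - 1)
        (by linarith : (D:ℝ) - 1 ≤ (D:ℝ)) 3]
    linarith
  · interval_cases D <;>
      (push_cast; exact arith_aux' _ _ (by norm_num) (by norm_num))

private lemma scalar_bound' (D : ℕ) (hD : 2 ≤ D) (Mr n : ℝ) (hM : 0 ≤ Mr) (hn : 0 ≤ n) :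
    ((Real.exp Mr / D) * n + (Real.exp Mr / D) * (Real.exp Mr * (Real.sqrt D * n) / D))
      + (Real.sqrt (Real.exp Mr / D) *
          ((Real.exp Mr / D) * n
            + (Real.exp Mr * (Real.sqrt D * n) / D) * Real.sqrt (Real.exp Mr / D))
        + ((Real.exp Mr / D) * n
            + (Real.exp Mr * (Real.sqrt D * n) / D) * Real.sqrt (Real.exp Mr / D))
          * Real.sqrt (Real.exp Mr / D))
      ≤ 2 * (D : ℝ) ^ 2 / ((D : ℝ) - 1) ^ 3 *
          Real.exp (3 * Real.sqrt ((D : ℝ) / ((D : ℝ) - 1)) * Mr) * n := by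
  have hD1 : (1 : ℝ) ≤ (D : ℝ) - 1 := by
    have : (2 : ℝ) ≤ D := by exact_mod_cast hD
    linarith
  have hDpos : (0 : ℝ) < D := by linarith
  set sD := Real.sqrt (D : ℝ) with hsDdef
  have hsD : 0 < sD := Real.sqrt_pos.2 hDpos
  have hsD2 : sD ^ 2 = (D : ℝ) := Real.sq_sqrt hDpos.le
  set Eh := Real.exp (Mr / 2) with hEhdef
  have hEh1 : 1 ≤ Eh := Real.one_le_exp (by linarith)
  have hEh0 : 0 < Eh := Real.exp_pos _
  have hE : Real.exp Mr = Eh ^ 2 := by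
    rw [hEhdef, sq, ← Real.exp_add]; ring_nf
  have hs0 : Real.sqrt (Real.exp Mr / D) = Eh / sD := by
    rw [hE, ← hsD2, Real.sqrt_div (by positivity), Real.sqrt_sq hEh0.le, Real.sqrt_sq hsD.le]
  have hr1 : 1 ≤ Real.sqrt ((D : ℝ) / ((D : ℝ) - 1)) := by
    rw [Real.one_le_sqrt]
    rw [le_div_iff₀ (by linarith)]
    linarith
  have hEX : Eh ^ 4 ≤ Real.exp (3 * Real.sqrt ((D : ℝ) / ((D : ℝ) - 1)) * Mr) := by
    have h4 : Eh ^ 4 = Real.exp (2 * Mr) := by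
      rw [hEhdef, ← Real.exp_nat_mul]; push_cast; ring_nf
    rw [h4]
    apply Real.exp_le_exp.2
    nlinarith
  have step1 :
      ((Eh ^ 2 / D) * n + (Eh ^ 2 / D) * (Eh ^ 2 * (sD * n) / D))
        + ((Eh / sD) * ((Eh ^ 2 / D) * n + (Eh ^ 2 * (sD * n) / D) * (Eh / sD))
          + ((Eh ^ 2 / D) * n + (Eh ^ 2 * (sD * n) / D) * (Eh / sD)) * (Eh / sD))
        ≤ Eh ^ 4 * ((1 + 5 / sD) / D) * n := by
    rw [← hsD2]
    have e1 : ((Eh ^ 2 / sD ^ 2) * n + (Eh ^ 2 / sD ^ 2) * (Eh ^ 2 * (sD * n) / sD ^ 2))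
        + ((Eh / sD) * ((Eh ^ 2 / sD ^ 2) * n + (Eh ^ 2 * (sD * n) / sD ^ 2) * (Eh / sD))
          + ((Eh ^ 2 / sD ^ 2) * n + (Eh ^ 2 * (sD * n) / sD ^ 2) * (Eh / sD)) * (Eh / sD))
        = (Eh ^ 2 * sD ^ 2 * n + Eh ^ 4 * sD * n
            + 2 * (Eh ^ 3 * sD * n + Eh ^ 4 * sD * n)) / sD ^ 4 := by
      field_simp
      ring
    have e2 : Eh ^ 4 * ((1 + 5 / sD) / sD ^ 2) * n
        = (Eh ^ 4 * sD ^ 2 * n + 5 * (Eh ^ 4 * sD * n)) / sD ^ 4 := by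
      field_simp
    rw [e1, e2]
    rw [div_le_div_iff₀ (by positivity) (by positivity)]
    have t1 : Eh ^ 2 ≤ Eh ^ 4 := pow_le_pow_right₀ hEh1 (by norm_num)
    have t2 : Eh ^ 3 ≤ Eh ^ 4 := pow_le_pow_right₀ hEh1 (by norm_num)
    have p1 : Eh ^ 2 * (sD ^ 2 * n) ≤ Eh ^ 4 * (sD ^ 2 * n) :=
      mul_le_mul_of_nonneg_right t1 (by positivity)
    have p2 : Eh ^ 3 * (sD * n) ≤ Eh ^ 4 * (sD * n) :=
      mul_le_mul_of_nonneg_right t2 (by positivity)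
    have q1 := mul_le_mul_of_nonneg_right p1 (pow_nonneg hsD.le 4)
    have q2 := mul_le_mul_of_nonneg_right p2 (pow_nonneg hsD.le 4)
    nlinarith [q1, q2]
  have harith := arith' D hD
  have hq : (1 + 5 / sD) / D ≤ 2 * (D : ℝ) ^ 2 / ((D : ℝ) - 1) ^ 3 := by
    rw [div_le_iff₀ hDpos]
    calc 1 + 5 / sD ≤ 2 * (D : ℝ) ^ 3 / ((D : ℝ) - 1) ^ 3 := harith
      _ = 2 * (D : ℝ) ^ 2 / ((D : ℝ) - 1) ^ 3 * D := by ring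
  rw [hs0, hE]
  calc ((Eh ^ 2 / D) * n + (Eh ^ 2 / D) * (Eh ^ 2 * (sD * n) / D))
        + ((Eh / sD) * ((Eh ^ 2 / D) * n + (Eh ^ 2 * (sD * n) / D) * (Eh / sD))
          + ((Eh ^ 2 / D) * n + (Eh ^ 2 * (sD * n) / D) * (Eh / sD)) * (Eh / sD))
      ≤ Eh ^ 4 * ((1 + 5 / sD) / D) * n := step1
    _ ≤ Real.exp (3 * Real.sqrt ((D : ℝ) / ((D : ℝ) - 1)) * Mr)
          * (2 * (D : ℝ) ^ 2 / ((D : ℝ) - 1) ^ 3) * n := by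
        apply mul_le_mul_of_nonneg_right _ hn
        apply mul_le_mul hEX hq (by positivity) (Real.exp_pos _).le
    _ = 2 * (D : ℝ) ^ 2 / ((D : ℝ) - 1) ^ 3 *
          Real.exp (3 * Real.sqrt ((D : ℝ) / ((D : ℝ) - 1)) * Mr) * n := by ring

private lemma sum_exp_ge' (D : ℕ) (z : EuclideanSpace ℝ (Fin D)) (hz : ∑ j, z j = 0) :
    (D : ℝ) ≤ ∑ j, Real.exp (z j) := by
  have h1 : (D : ℝ) = ∑ j : Fin D, (z j + 1) := by
    rw [Finset.sum_add_distrib, hz, zero_add]; simp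
  rw [h1]; exact Finset.sum_le_sum fun j _ => Real.add_one_le_exp (z j)

private lemma softmax_nonneg' (D : ℕ) (z : EuclideanSpace ℝ (Fin D)) (i : Fin D) :
    0 ≤ softmax D z i := by
  simp only [softmax]
  exact div_nonneg (Real.exp_pos _).le (Finset.sum_nonneg fun j _ => (Real.exp_pos _).le)

private lemma softmax_le' (D : ℕ) (hD2 : 2 ≤ D) (z : EuclideanSpace ℝ (Fin D))
    (hz : ∑ j, z j = 0) (M : ℝ) (hzM : ‖z‖ ≤ M) (i : Fin D) :
    softmax D z i ≤ Real.exp M / D := by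
  have hDpos : (0 : ℝ) < D := by
    have : (2 : ℝ) ≤ D := by exact_mod_cast hD2
    linarith
  have h1 : Real.exp (z i) ≤ Real.exp M :=
    Real.exp_le_exp.2 (le_trans (le_trans (le_abs_self _) (abs_coord_le_norm' z i)) hzM)
  simp only [softmax]
  exact div_le_div₀ (Real.exp_pos M).le h1 hDpos (sum_exp_ge' D z hz)

private lemma softmax_sum_eq_one' (D : ℕ) (hD2 : 2 ≤ D) (z : EuclideanSpace ℝ (Fin D)) :
    ∑ i, softmax D z i = 1 := by
  have : Nonempty (Fin D) := Fin.pos_iff_nonempty.1 (by omega)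
  have hpos : 0 < ∑ j, Real.exp (z j) :=
    Finset.sum_pos (fun j _ => Real.exp_pos _) Finset.univ_nonempty
  simp only [softmax]
  rw [← Finset.sum_div, div_self hpos.ne']

private lemma softmax_norm_le' (D : ℕ) (hD2 : 2 ≤ D) (z : EuclideanSpace ℝ (Fin D))
    (hz : ∑ j, z j = 0) (M : ℝ) (hzM : ‖z‖ ≤ M) :
    ‖softmax D z‖ ≤ Real.sqrt (Real.exp M / D) := by
  apply norm_le_sqrt_of_sq_bound'
  calc ∑ i, softmax D z i ^ 2 ≤ ∑ i, (Real.exp M / D) * softmax D z i := by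
        apply Finset.sum_le_sum
        intro i _
        rw [sq]
        exact mul_le_mul_of_nonneg_right (softmax_le' D hD2 z hz M hzM i)
          (softmax_nonneg' D z i)
    _ = Real.exp M / D := by rw [← Finset.mul_sum, softmax_sum_eq_one' D hD2 z, mul_one]

end SoftmaxAux

/-- Local Lipschitz continuity of the softmax Jacobian on `𝟙^⊥`, in operator norm. -/
theorem softmax_jacobian_local_lipschitz (D : ℕ) (hD : 2 ≤ D)
    (x y : EuclideanSpace ℝ (Fin D))
    (hx : ∑ j, x j = 0) (hy : ∑ j, y j = 0) :
    ‖Matrix.toEuclideanCLM (𝕜 := ℝ) (softmaxJacobian D x) -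
        Matrix.toEuclideanCLM (𝕜 := ℝ) (softmaxJacobian D y)‖ ≤
      2 * (D : ℝ) ^ 2 / ((D : ℝ) - 1) ^ 3 *
        Real.exp (3 * Real.sqrt ((D : ℝ) / ((D : ℝ) - 1)) * max ‖x‖ ‖y‖) * ‖x - y‖ := by
  have hDpos : (0 : ℝ) < D := by
    have : (2 : ℝ) ≤ D := by exact_mod_cast hD
    linarith
  set M := max ‖x‖ ‖y‖ with hMdef
  have hM0 : 0 ≤ M := le_trans (norm_nonneg x) (le_max_left _ _)
  have hxM : ‖x‖ ≤ M := le_max_left _ _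
  have hyM : ‖y‖ ≤ M := le_max_right _ _
  set n := ‖x - y‖ with hndef
  have hn0 : 0 ≤ n := norm_nonneg _
  set EM := Real.exp M with hEMdef
  have hEM0 : 0 < EM := Real.exp_pos _
  set sD := Real.sqrt (D : ℝ) with hsDdef
  have hsD0 : 0 < sD := Real.sqrt_pos.2 hDpos
  have hSxD : (D : ℝ) ≤ ∑ j, Real.exp (x j) := sum_exp_ge' D x hx
  have hSyD : (D : ℝ) ≤ ∑ j, Real.exp (y j) := sum_exp_ge' D y hy
  have hSx0 : (0 : ℝ) < ∑ j, Real.exp (x j) := lt_of_lt_of_le hDpos hSxD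
  have hSy0 : (0 : ℝ) < ∑ j, Real.exp (y j) := lt_of_lt_of_le hDpos hSyD
  have hexpx : ∀ i, Real.exp (x i) ≤ EM := fun i =>
    Real.exp_le_exp.2 (le_trans (le_trans (le_abs_self _) (abs_coord_le_norm' x i)) hxM)
  have hexpy : ∀ i, Real.exp (y i) ≤ EM := fun i =>
    Real.exp_le_exp.2 (le_trans (le_trans (le_abs_self _) (abs_coord_le_norm' y i)) hyM)
  -- the two pieces of the softmax difference
  set P : EuclideanSpace ℝ (Fin D) :=
    WithLp.toLp 2 (fun i => (Real.exp (x i) - Real.exp (y i)) / ∑ j, Real.exp (x j)) with hPdef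
  set Q : EuclideanSpace ℝ (Fin D) :=
    WithLp.toLp 2 (fun i => softmax D y i *
      ((∑ j, Real.exp (y j) - ∑ j, Real.exp (x j)) / ∑ j, Real.exp (x j))) with hQdef
  have hPQ : softmax D x - softmax D y = P + Q := by
    ext i
    show softmax D x i - softmax D y i = P i + Q i
    show Real.exp (x i) / (∑ j, Real.exp (x j)) - Real.exp (y i) / (∑ j, Real.exp (y j))
      = (Real.exp (x i) - Real.exp (y i)) / (∑ j, Real.exp (x j))
        + Real.exp (y i) / (∑ j, Real.exp (y j)) *
            ((∑ j, Real.exp (y j) - ∑ j, Real.exp (x j)) / ∑ j, Real.exp (x j))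
    field_simp
    ring
  -- numerator estimates
  have hnum : ∀ i, |Real.exp (x i) - Real.exp (y i)| ≤ EM * |(x - y) i| := by
    intro i
    have h1 : x i ≤ M := le_trans (le_trans (le_abs_self _) (abs_coord_le_norm' x i)) hxM
    have h2 : y i ≤ M := le_trans (le_trans (le_abs_self _) (abs_coord_le_norm' y i)) hyM
    exact abs_exp_sub_exp_le' h1 h2
  have hSdiff : |(∑ j, Real.exp (y j)) - ∑ j, Real.exp (x j)| ≤ EM * (sD * n) := by
    calc |(∑ j, Real.exp (y j)) - ∑ j, Real.exp (x j)|
        = |∑ j, (Real.exp (y j) - Real.exp (x j))| := by rw [Finset.sum_sub_distrib]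
      _ ≤ ∑ j, |Real.exp (y j) - Real.exp (x j)| := Finset.abs_sum_le_sum_abs _ _
      _ ≤ ∑ j, EM * |(x - y) j| := by
          apply Finset.sum_le_sum
          intro j _
          rw [abs_sub_comm]
          exact hnum j
      _ = EM * ∑ j, |(x - y) j| := by rw [Finset.mul_sum]
      _ ≤ EM * (sD * n) :=
          mul_le_mul_of_nonneg_left (sum_abs_le_sqrt_mul_norm' (x - y)) hEM0.le
  -- bounds on P and Q
  have hPabs : ∀ i, |P i| ≤ EM / D * |(x - y) i| := by
    intro i
    show |(Real.exp (x i) - Real.exp (y i)) / ∑ j, Real.exp (x j)| ≤ _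
    rw [abs_div, abs_of_pos hSx0]
    calc |Real.exp (x i) - Real.exp (y i)| / (∑ j, Real.exp (x j))
        ≤ EM * |(x - y) i| / D :=
          div_le_div₀ (by positivity) (hnum i) hDpos hSxD
      _ = EM / D * |(x - y) i| := mul_div_right_comm _ _ _
  have hQabs : ∀ i, |Q i| ≤ EM * (sD * n) / D * |softmax D y i| := by
    intro i
    show |softmax D y i *
      ((∑ j, Real.exp (y j) - ∑ j, Real.exp (x j)) / ∑ j, Real.exp (x j))| ≤ _
    rw [abs_mul, abs_div, abs_of_pos hSx0, mul_comm]
    apply mul_le_mul_of_nonneg_right _ (abs_nonneg _)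
    exact div_le_div₀ (by positivity) hSdiff hDpos hSxD
  have hPnorm : ‖P‖ ≤ EM / D * n := by
    have := norm_le_mul_norm_of_abs_le' P (x - y) (EM / D) (by positivity) hPabs
    rwa [← hndef] at this
  have hQnorm : ‖Q‖ ≤ EM * (sD * n) / D * Real.sqrt (EM / D) := by
    have h1 := norm_le_mul_norm_of_abs_le' Q (softmax D y) (EM * (sD * n) / D)
      (by positivity) hQabs
    exact le_trans h1 (mul_le_mul_of_nonneg_left
      (softmax_norm_le' D hD y hy M hyM) (by positivity))
  have hδnorm : ‖softmax D x - softmax D y‖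
      ≤ EM / D * n + EM * (sD * n) / D * Real.sqrt (EM / D) := by
    rw [hPQ]
    exact le_trans (norm_add_le P Q) (add_le_add hPnorm hQnorm)
  have hδinf : ∀ i, |(softmax D x - softmax D y) i|
      ≤ EM / D * n + EM / D * (EM * (sD * n) / D) := by
    intro i
    have h1 : (softmax D x - softmax D y) i = P i + Q i := by rw [hPQ]; rfl
    rw [h1]
    refine le_trans (abs_add_le _ _) (add_le_add ?_ ?_)
    · exact le_trans (hPabs i) (mul_le_mul_of_nonneg_left
        (le_trans (abs_coord_le_norm' (x - y) i) le_rfl) (by positivity))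
    · calc |Q i| ≤ EM * (sD * n) / D * |softmax D y i| := hQabs i
        _ ≤ EM * (sD * n) / D * (EM / D) := by
            apply mul_le_mul_of_nonneg_left _ (by positivity)
            rw [abs_of_nonneg (softmax_nonneg' D y i)]
            exact softmax_le' D hD y hy M hyM i
        _ = EM / D * (EM * (sD * n) / D) := mul_comm _ _
  have hna : ‖softmax D x‖ ≤ Real.sqrt (EM / D) := softmax_norm_le' D hD x hx M hxM
  have hnb : ‖softmax D y‖ ≤ Real.sqrt (EM / D) := softmax_norm_le' D hD y hy M hyM
  -- assemble
  rw [← map_sub, jac_sub_decomp', map_sub, map_sub]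
  have b1 : ‖Matrix.toEuclideanCLM (𝕜 := ℝ) (Matrix.diagonal
      (fun i => (softmax D x - softmax D y) i))‖
      ≤ EM / D * n + EM / D * (EM * (sD * n) / D) :=
    clm_diagonal_le' _ _ (by positivity) hδinf
  have b2 : ‖Matrix.toEuclideanCLM (𝕜 := ℝ) (Matrix.vecMulVec (fun i => softmax D x i)
      (fun i => (softmax D x - softmax D y) i))‖
      ≤ Real.sqrt (EM / D) * (EM / D * n + EM * (sD * n) / D * Real.sqrt (EM / D)) :=
    le_trans (clm_vecMulVec_le' (softmax D x) (softmax D x - softmax D y))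
      (mul_le_mul hna hδnorm (norm_nonneg _) (Real.sqrt_nonneg _))
  have b3 : ‖Matrix.toEuclideanCLM (𝕜 := ℝ) (Matrix.vecMulVec
      (fun i => (softmax D x - softmax D y) i) (fun i => softmax D y i))‖
      ≤ (EM / D * n + EM * (sD * n) / D * Real.sqrt (EM / D)) * Real.sqrt (EM / D) :=
    le_trans (clm_vecMulVec_le' (softmax D x - softmax D y) (softmax D y))
      (mul_le_mul hδnorm hnb (norm_nonneg _) (by positivity))
  have hfinal := scalar_bound' D hD M n hM0 hn0
  rw [← hEMdef, ← hsDdef] at hfinal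
  calc ‖_ - _ - _‖ ≤ ‖_ - _‖ + ‖_‖ := norm_sub_le _ _
    _ ≤ ‖_‖ + ‖_‖ + ‖_‖ := by gcongr; exact norm_sub_le _ _
    _ ≤ (EM / D * n + EM / D * (EM * (sD * n) / D))
        + (Real.sqrt (EM / D) * (EM / D * n + EM * (sD * n) / D * Real.sqrt (EM / D))
          + (EM / D * n + EM * (sD * n) / D * Real.sqrt (EM / D)) * Real.sqrt (EM / D)) := by
        linarith [b1, b2, b3]
    _ ≤ 2 * (D : ℝ) ^ 2 / ((D : ℝ) - 1) ^ 3 *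
          Real.exp (3 * Real.sqrt ((D : ℝ) / ((D : ℝ) - 1)) * M) * n := hfinal
end

section
/- Let $\Lambda : [0,1] \times \mathbb{R}^d \to \mathbb{R}^d$ be continuous, and let $a, b, c > 0$ satisfy: $\sup_{\mu \in [0,1]} \|\Lambda(\mu, q)\| \le a e^{c\|q\|}$ for all $q$, and $\sup_{\mu \in [0,1]} \|\Lambda(\mu,q) - \Lambda(\mu,\tilde{q})\| \le b e^{c \max(\|q\|, \|\tilde{q}\|)} \|q - \tilde{q}\|$ for all $q, \tilde{q}$. Let $q_0 \in \mathbb{R}^d$ satisfy $2b < \exp\left(-2c(\|q_0\| + a e^{c\|q_0\|})\right)$. Then there is a unique solution $q : [0,1] \to \mathbb{R}^d$ of $q'(\mu) = \Lambda(\mu, q(\mu))$ with $q(0) = q_0$, and for all $\mu \in [0,1]$, $\|q(\mu) - q_0\| \le 2\mu a e^{c\|q_0\|}$. -/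
open Set

/-- Grönwall–Bahouri–Bellman type non-explosion result for ODEs with exponentially growing
coefficients. -/
theorem gronwall_bahouri_bellman (d : ℕ)
    (Λ : ℝ → EuclideanSpace ℝ (Fin d) → EuclideanSpace ℝ (Fin d))
    (hcont : ContinuousOn (fun p : ℝ × EuclideanSpace ℝ (Fin d) => Λ p.1 p.2)
      (Set.Icc 0 1 ×ˢ Set.univ))
    (a b c : ℝ) (ha : 0 < a) (hb : 0 < b) (hc : 0 < c)
    (hgrowth : ∀ μ ∈ Set.Icc (0 : ℝ) 1, ∀ q, ‖Λ μ q‖ ≤ a * Real.exp (c * ‖q‖))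
    (hlip : ∀ μ ∈ Set.Icc (0 : ℝ) 1, ∀ q qt,
      ‖Λ μ q - Λ μ qt‖ ≤ b * Real.exp (c * max ‖q‖ ‖qt‖) * ‖q - qt‖)
    (q₀ : EuclideanSpace ℝ (Fin d))
    (hcond : 2 * b < Real.exp (-2 * c * (‖q₀‖ + a * Real.exp (c * ‖q₀‖)))) :
    ∃ q : ℝ → EuclideanSpace ℝ (Fin d),
      (q 0 = q₀ ∧
        (∀ μ ∈ Set.Icc (0 : ℝ) 1, HasDerivWithinAt q (Λ μ (q μ)) (Set.Icc 0 1) μ) ∧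
        (∀ μ ∈ Set.Icc (0 : ℝ) 1, ‖q μ - q₀‖ ≤ 2 * μ * a * Real.exp (c * ‖q₀‖))) ∧
      ∀ qt : ℝ → EuclideanSpace ℝ (Fin d), qt 0 = q₀ →
        (∀ μ ∈ Set.Icc (0 : ℝ) 1, HasDerivWithinAt qt (Λ μ (qt μ)) (Set.Icc 0 1) μ) →
        Set.EqOn q qt (Set.Icc 0 1) := by
  classical
  set A : ℝ := a * Real.exp (c * ‖q₀‖) with hAdef
  have hA0 : 0 < A := mul_pos ha (Real.exp_pos _)
  set Kc : ℝ := ‖q₀‖ + A with hKdef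
  have hKc0 : 0 < Kc := by positivity
  set L : ℝ := b * Real.exp (2 * c * Kc) with hLdef
  have hL0 : 0 < L := by positivity
  have hL2 : 2 * L < 1 := by
    have h1 : (2 * b) * Real.exp (2 * c * Kc)
        < Real.exp (-2 * c * Kc) * Real.exp (2 * c * Kc) :=
      mul_lt_mul_of_pos_right hcond (Real.exp_pos _)
    rw [← Real.exp_add, show -2 * c * Kc + 2 * c * Kc = 0 by ring, Real.exp_zero] at h1
    rw [hLdef]; linarith
  -- norms of points in the ball
  have hnorm2K : ∀ x : EuclideanSpace ℝ (Fin d), ‖x - q₀‖ ≤ 2 * A → ‖x‖ ≤ 2 * Kc := by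
    intro x hx
    have h1 : ‖x‖ ≤ ‖x - q₀‖ + ‖q₀‖ := by
      have := norm_add_le (x - q₀) q₀
      rwa [sub_add_cancel] at this
    have hq0 : (0 : ℝ) ≤ ‖q₀‖ := norm_nonneg _
    rw [hKdef]; linarith
  -- growth bound on the ball
  have fact1 : ∀ μ ∈ Set.Icc (0 : ℝ) 1, ∀ x : EuclideanSpace ℝ (Fin d),
      ‖x - q₀‖ ≤ 2 * A → ‖Λ μ x‖ ≤ 2 * A := by
    intro μ hμ x hx
    have hxn : ‖x‖ ≤ 2 * Kc := hnorm2K x hx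
    have hqn : ‖q₀‖ ≤ 2 * Kc := by rw [hKdef]; nlinarith [norm_nonneg q₀]
    have hmax : c * max ‖x‖ ‖q₀‖ ≤ 2 * c * Kc := by
      have := max_le hxn hqn; nlinarith
    have h2 : Real.exp (c * max ‖x‖ ‖q₀‖) ≤ Real.exp (2 * c * Kc) := Real.exp_le_exp.2 hmax
    have h1 : ‖Λ μ x - Λ μ q₀‖ ≤ b * Real.exp (c * max ‖x‖ ‖q₀‖) * ‖x - q₀‖ := hlip μ hμ x q₀
    have h3 : ‖Λ μ q₀‖ ≤ A := hgrowth μ hμ q₀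
    have h4 : ‖Λ μ x‖ ≤ ‖Λ μ x - Λ μ q₀‖ + ‖Λ μ q₀‖ := by
      have := norm_add_le (Λ μ x - Λ μ q₀) (Λ μ q₀)
      rwa [sub_add_cancel] at this
    have h5 : b * Real.exp (c * max ‖x‖ ‖q₀‖) * ‖x - q₀‖ ≤ L * (2 * A) := by
      rw [hLdef]
      apply mul_le_mul (mul_le_mul_of_nonneg_left h2 hb.le) hx (norm_nonneg _) (by positivity)
    nlinarith
  -- Lipschitz on the ball
  have fact2 : ∀ μ ∈ Set.Icc (0 : ℝ) 1,
      LipschitzOnWith L.toNNReal (Λ μ) (Metric.closedBall q₀ (2 * A)) := by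
    intro μ hμ
    rw [lipschitzOnWith_iff_dist_le_mul]
    intro u hu v hv
    rw [Metric.mem_closedBall, dist_eq_norm] at hu hv
    have hun : ‖u‖ ≤ 2 * Kc := hnorm2K u hu
    have hvn : ‖v‖ ≤ 2 * Kc := hnorm2K v hv
    have hmax : c * max ‖u‖ ‖v‖ ≤ 2 * c * Kc := by
      have := max_le hun hvn; nlinarith
    have h2 : Real.exp (c * max ‖u‖ ‖v‖) ≤ Real.exp (2 * c * Kc) := Real.exp_le_exp.2 hmax
    have h1 : ‖Λ μ u - Λ μ v‖ ≤ b * Real.exp (c * max ‖u‖ ‖v‖) * ‖u - v‖ := hlip μ hμ u v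
    rw [dist_eq_norm, dist_eq_norm, Real.coe_toNNReal _ hL0.le]
    calc ‖Λ μ u - Λ μ v‖ ≤ b * Real.exp (c * max ‖u‖ ‖v‖) * ‖u - v‖ := h1
      _ ≤ L * ‖u - v‖ := by
          rw [hLdef]
          exact mul_le_mul_of_nonneg_right (mul_le_mul_of_nonneg_left h2 hb.le) (norm_nonneg _)
  -- a priori bound for any solution
  have hbound : ∀ f : ℝ → EuclideanSpace ℝ (Fin d), f 0 = q₀ →
      (∀ μ ∈ Set.Icc (0 : ℝ) 1, HasDerivWithinAt f (Λ μ (f μ)) (Set.Icc 0 1) μ) →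
      ∀ μ ∈ Set.Icc (0 : ℝ) 1, ‖f μ - q₀‖ ≤ 2 * μ * A := by
    intro f hf0 hderiv
    have hcontf : ContinuousOn f (Set.Icc 0 1) := fun μ hμ => (hderiv μ hμ).continuousWithinAt
    have key : Set.Icc (0 : ℝ) 1 ⊆ {μ | ‖f μ - q₀‖ ≤ 2 * μ * A} := by
      apply IsClosed.Icc_subset_of_forall_exists_gt
      · -- closedness
        have hg : ContinuousOn (fun μ => ‖f μ - q₀‖ - 2 * μ * A) (Set.Icc 0 1) :=
          (hcontf.sub continuousOn_const).norm.sub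
            ((continuous_const.mul continuous_id).mul continuous_const).continuousOn
        have hcl := hg.preimage_isClosed_of_isClosed isClosed_Icc isClosed_Iic (t := Set.Iic 0)
        convert hcl using 1
        ext μ
        simp only [Set.mem_inter_iff, Set.mem_setOf_eq, Set.mem_preimage, Set.mem_Iic,
          sub_nonpos, and_comm]
      · simp [hf0]
      · intro x hx y hy
        obtain ⟨hxs, hx01⟩ := hx
        obtain ⟨hx0, hx1⟩ := hx01
        rw [Set.mem_setOf_eq] at hxs
        rw [Set.mem_Ioi] at hy
        have hxA : ‖f x - q₀‖ < 2 * A := lt_of_le_of_lt hxs (by nlinarith)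
        have hcw : ContinuousWithinAt (fun μ => ‖f μ - q₀‖) (Set.Icc 0 1) x :=
          ((hcontf x ⟨hx0, hx1.le⟩).sub continuousWithinAt_const).norm
        have hmem : (fun μ => ‖f μ - q₀‖) ⁻¹' Set.Iio (2 * A) ∈ nhdsWithin x (Set.Icc 0 1) :=
          hcw (Iio_mem_nhds hxA)
        rw [Metric.mem_nhdsWithin_iff] at hmem
        obtain ⟨δ, hδ, hδsub⟩ := hmem
        set ε : ℝ := min (δ / 2) (min (y - x) (1 - x)) with hεdef
        have hε0 : 0 < ε := lt_min (by linarith) (lt_min (by linarith) (by linarith))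
        have hεδ : ε ≤ δ / 2 := min_le_left _ _
        have hεy : ε ≤ y - x := le_trans (min_le_right _ _) (min_le_left _ _)
        have hε1 : ε ≤ 1 - x := le_trans (min_le_right _ _) (min_le_right _ _)
        set z : ℝ := x + ε with hzdef
        have hsub : Set.Icc x z ⊆ Set.Icc (0 : ℝ) 1 := by
          intro s hs
          exact ⟨le_trans hx0 hs.1, by have := hs.2; rw [hzdef] at this; linarith⟩
        have hball : ∀ μ ∈ Set.Icc x z, ‖f μ - q₀‖ ≤ 2 * A := by
          intro μ hμ
          have hμball : μ ∈ Metric.ball x δ := by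
            rw [Metric.mem_ball, Real.dist_eq, abs_of_nonneg (by linarith [hμ.1])]
            have h2 : μ - x ≤ ε := by have := hμ.2; rw [hzdef] at this; linarith
            linarith
          exact (hδsub ⟨hμball, hsub hμ⟩).le
        have hderiv' : ∀ μ ∈ Set.Icc x z, HasDerivWithinAt f (Λ μ (f μ)) (Set.Icc x z) μ :=
          fun μ hμ => (hderiv μ (hsub hμ)).mono hsub
        have hbd : ∀ μ ∈ Set.Icc x z, ‖Λ μ (f μ)‖ ≤ 2 * A :=
          fun μ hμ => fact1 μ (hsub hμ) _ (hball μ hμ)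
        have hxz : x ≤ z := by rw [hzdef]; linarith
        have hmvt := Convex.norm_image_sub_le_of_norm_hasDerivWithin_le hderiv' hbd
          (convex_Icc x z) (Set.left_mem_Icc.2 hxz) (Set.right_mem_Icc.2 hxz)
        have hzx : ‖z - x‖ = ε := by
          rw [Real.norm_eq_abs, show z - x = ε by rw [hzdef]; ring, abs_of_pos hε0]
        rw [hzx] at hmvt
        refine ⟨z, ?_, by rw [hzdef]; linarith, by rw [hzdef]; linarith⟩
        rw [Set.mem_setOf_eq]
        have h6 : ‖f z - q₀‖ ≤ ‖f z - f x‖ + ‖f x - q₀‖ := by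
          have := norm_add_le (f z - f x) (f x - q₀)
          rwa [sub_add_sub_cancel] at this
        have hz : z = x + ε := hzdef
        nlinarith
    intro μ hμ
    exact key hμ
  -- existence via Picard–Lindelöf
  have hrA : (((2 * A).toNNReal : NNReal) : ℝ) = 2 * A := Real.coe_toNNReal _ (by linarith)
  have hPL : IsPicardLindelof Λ (tmin := 0) (tmax := 1) ⟨0, Set.left_mem_Icc.2 zero_le_one⟩ q₀
      (2 * A).toNNReal 0 (2 * A).toNNReal L.toNNReal :=
    { lipschitzOnWith := by
        intro t ht
        rw [hrA]
        exact fact2 t ht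
      continuousOn := by
        intro x hx
        have : ContinuousOn ((fun p : ℝ × EuclideanSpace ℝ (Fin d) => Λ p.1 p.2) ∘
            (fun t : ℝ => (t, x))) (Set.Icc 0 1) := by
          apply hcont.comp ((continuous_id.prodMk continuous_const).continuousOn)
          intro t ht
          exact ⟨ht, Set.mem_univ _⟩
        exact this
      norm_le := by
        intro t ht x hx
        rw [hrA, Metric.mem_closedBall, dist_eq_norm] at hx
        rw [hrA]
        exact fact1 t ht x hx
      mul_max_le := by
        simp only [NNReal.coe_zero, sub_zero, NNReal.coe_sub, hrA]
        norm_num }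
  obtain ⟨q, hq0, hq'⟩ : ∃ q : ℝ → EuclideanSpace ℝ (Fin d), q 0 = q₀ ∧
      ∀ t ∈ Set.Icc (0 : ℝ) 1, HasDerivWithinAt q (Λ t (q t)) (Set.Icc 0 1) t :=
    hPL.exists_eq_forall_mem_Icc_hasDerivWithinAt₀
  have hqb := hbound q hq0 hq'
  refine ⟨q, ⟨hq0, hq', ?_⟩, ?_⟩
  · intro μ hμ
    have := hqb μ hμ
    rw [hAdef] at this
    linarith [this]
  · -- uniqueness
    intro qt hqt0 hqt'
    set v' : ℝ → EuclideanSpace ℝ (Fin d) → EuclideanSpace ℝ (Fin d) :=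
      fun t x => Λ (min 1 (max 0 t)) x with hv'def
    have hclamp : ∀ t : ℝ, min 1 (max 0 t) ∈ Set.Icc (0 : ℝ) 1 :=
      fun t => ⟨le_min zero_le_one (le_max_left _ _), min_le_left _ _⟩
    have hclamp_eq : ∀ t ∈ Set.Ico (0 : ℝ) 1, min 1 (max 0 t) = t := by
      intro t ht
      rw [max_eq_right ht.1, min_eq_right ht.2.le]
    have hv : ∀ t, LipschitzOnWith L.toNNReal (v' t) (Metric.closedBall q₀ (2 * A)) :=
      fun t => fact2 _ (hclamp t)
    have hmemball : ∀ (f : ℝ → EuclideanSpace ℝ (Fin d)), f 0 = q₀ →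
        (∀ μ ∈ Set.Icc (0 : ℝ) 1, HasDerivWithinAt f (Λ μ (f μ)) (Set.Icc 0 1) μ) →
        ∀ t ∈ Set.Ico (0 : ℝ) 1, f t ∈ Metric.closedBall q₀ (2 * A) := by
      intro f hf0 hderiv t ht
      have := hbound f hf0 hderiv t (Set.Ico_subset_Icc_self ht)
      rw [Metric.mem_closedBall, dist_eq_norm]
      nlinarith [ht.1, ht.2]
    have hderivIci : ∀ (f : ℝ → EuclideanSpace ℝ (Fin d)),
        (∀ μ ∈ Set.Icc (0 : ℝ) 1, HasDerivWithinAt f (Λ μ (f μ)) (Set.Icc 0 1) μ) →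
        ∀ t ∈ Set.Ico (0 : ℝ) 1, HasDerivWithinAt f (v' t (f t)) (Set.Ici t) t := by
      intro f hderiv t ht
      have h1 := (hderiv t (Set.Ico_subset_Icc_self ht)).mono_of_mem_nhdsWithin
        (Icc_mem_nhdsGE_of_mem ht)
      rw [hv'def]
      simp only [hclamp_eq t ht]
      exact h1
    exact ODE_solution_unique_of_mem_Icc_right (fun t _ => hv t)
      (fun μ hμ => (hq' μ hμ).continuousWithinAt)
      (hderivIci q hq') (hmemball q hq0 hq')
      (fun μ hμ => (hqt' μ hμ).continuousWithinAt)
      (hderivIci qt hqt') (hmemball qt hqt0 hqt')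
      (hq0.trans hqt0.symm)
end
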